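/- arXiv:1711.08584 — 7 statements merged into one kernel-verified Lean document; each statement's English description precedes it below -/
import Mathlib

section
/- For integers n ≥ 1 and 0 ≤ m ≤ n, the number of (n,m)-Dyck paths is independent of m and equals the n-th Catalan number C_n = (1/(n+1))·C(2n,n). -/
-- A lattice path is a list of steps: `true` = up step `(0,1)`, `false` = down step `(1,0)`.
/-- The number of up steps of `p` that lie strictly below the line `y = x`
(i.e. up steps starting at a point with `y < x`). -/
def upsBelow (p : List Bool) : ℕ :=
  (List.range p.length).countP fun i =>
    p.getD i false && decide ((p.take i).count true < (p.take i).count false)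

/-- `IsNM n m p`: `p` is an `(n,m)`-Dyck path, i.e. a path from `(0,0)` to `(n,n)`
with exactly `m` up steps below the line `y = x`. -/
def IsNM (n m : ℕ) (p : List Bool) : Prop :=
  p.length = 2 * n ∧ p.count true = n ∧ upsBelow p = m

/-- The number of peaks (`UD` factors) of `p`. -/
def peaks (p : List Bool) : ℕ :=
  (List.range (p.length - 1)).countP fun i => p.getD i false && !p.getD (i + 1) true

/-- The number of `(n,m)`-Dyck paths with exactly `k` peaks. -/
noncomputable def pC (n m k : ℕ) : ℕ :=
  Nat.card {p : List Bool // IsNM n m p ∧ peaks p = k}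

/-- The number of `(n,m)`-Dyck paths with exactly `k` peaks whose first step is `a`
and whose last step is `b`. -/
noncomputable def pXY (n m k : ℕ) (a b : Bool) : ℕ :=
  Nat.card {p : List Bool // IsNM n m p ∧ peaks p = k ∧
    p.head? = some a ∧ p.getLast? = some b}

/-!
Decompose a path of semilength `n + 1` at its first return to the diagonal: it is either
`U A D B` or `D Ā U B`, where `A` is a Dyck path of semilength `k` and `Ā` its mirror image.
In the first case the up steps below the diagonal are those of `B`; in the second case they are
the `k` up steps of `Ā`, the step `U`, and those of `B`. Writing `N(n, m)` for the number of
`(n, m)`-paths this gives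
`N(n + 1, m) = ∑_{k < n + 1 - m} N(k, 0) N(n - k, m) + ∑_{k < m} N(k, 0) N(n - k, m - 1 - k)`,
and by induction both sums are pieces of the Catalan convolution `∑_{k ≤ n} C_k C_{n - k}`
that together cover it once, by the symmetry `k ↔ n - k`.
-/

namespace ChungFeller

def height (l : List Bool) : ℤ := l.count true - l.count false

@[simp] lemma height_nil : height [] = 0 := by simp [height]

@[simp] lemma height_cons_true (l : List Bool) : height (true :: l) = height l + 1 := by
  simp [height]; ring

@[simp] lemma height_cons_false (l : List Bool) : height (false :: l) = height l - 1 := by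
  simp [height]; ring

@[simp] lemma height_append (l₁ l₂ : List Bool) :
    height (l₁ ++ l₂) = height l₁ + height l₂ := by
  simp only [height, List.count_append]; push_cast; ring

@[simp] lemma height_map_not (l : List Bool) : height (l.map not) = -height l := by
  induction l with
  | nil => simp
  | cons b l ih => cases b <;> simp [ih] <;> ring

lemma count_true_map_not (l : List Bool) : (l.map not).count true = l.count false :=
  List.count_map_of_injective l not Bool.not_injective false

/-- `upsBelow` for a path starting at height `h` above the diagonal. -/
def flaws (h : ℤ) : List Bool → ℕ
  | [] => 0
  | true :: l => (if h < 0 then 1 else 0) + flaws (h + 1) l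
  | false :: l => flaws (h - 1) l

lemma flaws_append (l₁ l₂ : List Bool) (h : ℤ) :
    flaws h (l₁ ++ l₂) = flaws h l₁ + flaws (h + height l₁) l₂ := by
  induction l₁ generalizing h with
  | nil => simp [flaws]
  | cons b l ih =>
    cases b
    · simp only [List.cons_append, flaws, ih, height_cons_false]; ring_nf
    · simp only [List.cons_append, flaws, ih, height_cons_true]; ring_nf

lemma flaws_le_count_true (l : List Bool) (h : ℤ) : flaws h l ≤ l.count true := by
  induction l generalizing h with
  | nil => simp [flaws]
  | cons b l ih =>
    cases b
    · simpa [flaws] using ih (h - 1)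
    · have := ih (h + 1); simp only [flaws, List.count_cons_self]; split <;> omega

lemma flaws_eq_zero_of_nonneg {l : List Bool} {h : ℤ} (hl : ∀ i, 0 ≤ h + height (l.take i)) :
    flaws h l = 0 := by
  induction l generalizing h with
  | nil => rfl
  | cons b l ih =>
    have h0 : 0 ≤ h := by simpa using hl 0
    cases b
    · exact ih fun i => by have := hl (i + 1); simp at this; linarith
    · simp only [flaws, if_neg (not_lt.2 h0), zero_add]
      exact ih fun i => by have := hl (i + 1); simp at this; linarith

lemma flaws_eq_count_true_of_neg {l : List Bool} {h : ℤ} (hl : ∀ i, h + height (l.take i) < 0) :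
    flaws h l = l.count true := by
  induction l generalizing h with
  | nil => rfl
  | cons b l ih =>
    have h0 : h < 0 := by simpa using hl 0
    cases b
    · simpa [flaws] using ih fun i => by have := hl (i + 1); simp at this; linarith
    · simp only [flaws, if_pos h0, List.count_cons_self]
      rw [ih fun i => by have := hl (i + 1); simp at this; linarith]
      omega

lemma flaws_pos_of_neg {l : List Bool} {h : ℤ} (hh : h < 0) (hend : 0 ≤ h + height l) :
    0 < flaws h l := by
  induction l generalizing h with
  | nil => simp at hend; linarith
  | cons b l ih =>
    cases b
    · exact ih (by linarith) (by simp at hend; linarith)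
    · simp [flaws, hh]

lemma nonneg_of_flaws_eq_zero {l : List Bool} {h : ℤ} (hf : flaws h l = 0)
    (hend : 0 ≤ h + height l) : ∀ i, 0 ≤ h + height (l.take i) := by
  have h0 : 0 ≤ h := not_lt.1 fun hh => (flaws_pos_of_neg hh hend).ne' hf
  induction l generalizing h with
  | nil => simpa using h0
  | cons b l ih =>
    rintro (_ | i)
    · simpa using h0
    cases b
    · have := ih hf (by simp at hend; linarith) ?_ i
      · simp; linarith
      · exact not_lt.1 fun hh => (flaws_pos_of_neg hh (by simp at hend; linarith)).ne' hf
    · simp only [flaws, if_neg (not_lt.2 h0), zero_add] at hf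
      have := ih hf (by simp at hend; linarith) (by linarith) i
      simp; linarith

lemma countP_range_eq_flaws (l : List Bool) (h : ℤ) :
    (List.range l.length).countP (fun i => l.getD i false && decide (h + height (l.take i) < 0))
      = flaws h l := by
  induction l generalizing h with
  | nil => rfl
  | cons b l ih =>
    rw [List.length_cons, List.range_succ_eq_map, List.countP_cons, List.countP_map]
    cases b
    · simp only [flaws, ← ih (h - 1)]; simp [Function.comp_def]; ring_nf
    · simp only [flaws, ← ih (h + 1)]; simp [Function.comp_def]; ring_nf

lemma upsBelow_eq_flaws (p : List Bool) : upsBelow p = flaws 0 p := by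
  rw [← countP_range_eq_flaws, upsBelow]
  congr 1; funext i
  simp [height]

lemma length_le_of_append_false_eq {A A' B B' : List Bool} (hA : height A = 0)
    (hnA' : ∀ i, 0 ≤ height (A'.take i)) (he : A ++ false :: B = A' ++ false :: B') :
    A'.length ≤ A.length := by
  by_contra! hlt
  have := hnA' (A.length + 1)
  rw [← List.take_append_of_le_length (l₂ := false :: B') hlt, ← he] at this
  simp [List.take_append, List.take_of_length_le, hA] at this

/-- Uniqueness of the first return to the diagonal. -/
lemma eq_of_append_false_eq {A A' B B' : List Bool} (hA : height A = 0) (hA' : height A' = 0)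
    (hnA : ∀ i, 0 ≤ height (A.take i)) (hnA' : ∀ i, 0 ≤ height (A'.take i))
    (he : A ++ false :: B = A' ++ false :: B') : A = A' ∧ B = B' := by
  have hlen : A.length = A'.length := le_antisymm
    (length_le_of_append_false_eq hA' hnA he.symm) (length_le_of_append_false_eq hA hnA' he)
  obtain ⟨rfl, hB⟩ := List.append_inj he hlen
  exact ⟨rfl, List.cons_injective hB⟩

lemma exists_eq_append_false_of_neg {l : List Bool} {h : ℤ} (hh : 0 ≤ h)
    (hl : h + height l < 0) :
    ∃ A B, l = A ++ false :: B ∧ h + height A = 0 ∧ ∀ i, 0 ≤ h + height (A.take i) := by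
  induction l generalizing h with
  | nil => simp at hl; omega
  | cons b l ih =>
    cases b
    · rcases hh.eq_or_lt with rfl | hpos
      · exact ⟨[], l, rfl, by simp, by simp⟩
      obtain ⟨A, B, rfl, hA, hnA⟩ := ih (h := h - 1) (by omega) (by simp at hl; linarith)
      refine ⟨false :: A, B, rfl, by simp; linarith, ?_⟩
      rintro (_ | i)
      · simpa using hh
      · have := hnA i; simp; linarith
    · obtain ⟨A, B, rfl, hA, hnA⟩ := ih (h := h + 1) (by omega) (by simp at hl; linarith)
      refine ⟨true :: A, B, rfl, by simp; linarith, ?_⟩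
      rintro (_ | i)
      · simpa using hh
      · have := hnA i; simp; linarith

lemma isNM_iff {n m : ℕ} {p : List Bool} :
    IsNM n m p ↔ p.count true = n ∧ height p = 0 ∧ flaws 0 p = m := by
  have := List.count_true_add_count_false p
  simp only [IsNM, upsBelow_eq_flaws, height]
  omega

lemma isNM_zero_iff {k : ℕ} {A : List Bool} :
    IsNM k 0 A ↔ A.count true = k ∧ height A = 0 ∧ ∀ i, 0 ≤ height (A.take i) := by
  rw [isNM_iff]
  refine and_congr_right fun _ => and_congr_right fun hA => ⟨fun hf i => ?_, fun hn => ?_⟩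
  · simpa using nonneg_of_flaws_eq_zero hf (by simp [hA]) i
  · exact flaws_eq_zero_of_nonneg (by simpa using hn)

lemma flaws_cons_true_append {A : List Bool} (hA : height A = 0)
    (hnA : ∀ i, 0 ≤ height (A.take i)) (B : List Bool) :
    flaws 0 (true :: (A ++ false :: B)) = flaws 0 B := by
  have hA1 : flaws 1 A = 0 := flaws_eq_zero_of_nonneg fun i => by linarith [hnA i]
  simp [flaws, flaws_append, hA1, hA]

lemma flaws_cons_false_append {A : List Bool} (hA : height A = 0)
    (hnA : ∀ i, 0 ≤ height (A.take i)) (B : List Bool) :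
    flaws 0 (false :: (A.map not ++ true :: B)) = A.count true + 1 + flaws 0 B := by
  have hA1 : flaws (-1) (A.map not) = A.count true := by
    rw [flaws_eq_count_true_of_neg fun i => ?_, count_true_map_not]
    · simp [height] at hA; omega
    · rw [← List.map_take, height_map_not]; linarith [hnA i]
  simp [flaws, flaws_append, hA1, hA]
  omega

lemma isNM_cons_true_append {n m k j : ℕ} {A B : List Bool} (hA : IsNM k 0 A) (hB : IsNM j m B)
    (hn : k + j + 1 = n) : IsNM n m (true :: (A ++ false :: B)) := by
  obtain ⟨hkA, hA0, hnA⟩ := isNM_zero_iff.1 hA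
  obtain ⟨hjB, hB0, hfB⟩ := isNM_iff.1 hB
  refine isNM_iff.2 ⟨?_, by simp [hA0, hB0], by rw [flaws_cons_true_append hA0 hnA, hfB]⟩
  simp; omega

lemma isNM_cons_false_append {n m k j m' : ℕ} {A B : List Bool} (hA : IsNM k 0 A)
    (hB : IsNM j m' B) (hn : k + j + 1 = n) (hm : k + m' + 1 = m) :
    IsNM n m (false :: (A.map not ++ true :: B)) := by
  obtain ⟨hkA, hA0, hnA⟩ := isNM_zero_iff.1 hA
  obtain ⟨hjB, hB0, hfB⟩ := isNM_iff.1 hB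
  refine isNM_iff.2
    ⟨?_, by simp [hA0, hB0], by rw [flaws_cons_false_append hA0 hnA, hfB]; omega⟩
  have : A.count false = k := by simp [height] at hA0; omega
  simp [count_true_map_not]; omega

abbrev Paths (n m : ℕ) : Type := {p : List Bool // IsNM n m p}

instance (n m : ℕ) : Finite (Paths n m) :=
  Set.Finite.to_subtype ((List.finite_length_eq Bool (2 * n)).subset fun _ hp => hp.1)

def upJoin (n m : ℕ) (x : Σ k : Fin (n + 1 - m), Paths k 0 × Paths (n - k) m) :
    Paths (n + 1) m :=
  ⟨true :: (x.2.1.1 ++ false :: x.2.2.1),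
    isNM_cons_true_append x.2.1.2 x.2.2.2 (by have := x.1.2; omega)⟩

def downJoin {n m : ℕ} (hm : m ≤ n + 1)
    (x : Σ k : Fin m, Paths k 0 × Paths (n - k) (m - 1 - k)) : Paths (n + 1) m :=
  ⟨false :: (x.2.1.1.map not ++ true :: x.2.2.1),
    isNM_cons_false_append x.2.1.2 x.2.2.2 (by have := x.1.2; omega) (by have := x.1.2; omega)⟩

lemma upJoin_injective (n m : ℕ) : Function.Injective (upJoin n m) := by
  rintro ⟨k, ⟨A, hA⟩, ⟨B, hB⟩⟩ ⟨k', ⟨A', hA'⟩, ⟨B', hB'⟩⟩ he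
  obtain ⟨hkA, hA0, hnA⟩ := isNM_zero_iff.1 hA
  obtain ⟨hkA', hA0', hnA'⟩ := isNM_zero_iff.1 hA'
  obtain ⟨rfl, rfl⟩ := eq_of_append_false_eq hA0 hA0' hnA hnA'
    (List.cons_injective (congrArg Subtype.val he))
  obtain rfl : k = k' := Fin.ext (hkA.symm.trans hkA')
  rfl

lemma downJoin_injective {n m : ℕ} (hm : m ≤ n + 1) : Function.Injective (downJoin hm) := by
  rintro ⟨k, ⟨A, hA⟩, ⟨B, hB⟩⟩ ⟨k', ⟨A', hA'⟩, ⟨B', hB'⟩⟩ he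
  obtain ⟨hkA, hA0, hnA⟩ := isNM_zero_iff.1 hA
  obtain ⟨hkA', hA0', hnA'⟩ := isNM_zero_iff.1 hA'
  have he' := congrArg (List.map not) (List.cons_injective (congrArg Subtype.val he))
  simp only [List.map_append, List.map_map, List.map_cons, Bool.involutive_not.comp_self,
    List.map_id, Bool.not_true] at he'
  obtain ⟨rfl, hB⟩ := eq_of_append_false_eq hA0 hA0' hnA hnA' he'
  obtain rfl := List.map_injective_iff.2 Bool.not_injective hB
  obtain rfl : k = k' := Fin.ext (hkA.symm.trans hkA')
  rfl

lemma exists_upJoin_eq {n m : ℕ} {p : Paths (n + 1) m} {l : List Bool} (hp : p.1 = true :: l) :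
    ∃ x, upJoin n m x = p := by
  obtain ⟨p, hpNM⟩ := p
  subst hp
  obtain ⟨hc, h0, hf⟩ := isNM_iff.1 hpNM
  obtain ⟨A, B, rfl, hA0, hnA⟩ :=
    exists_eq_append_false_of_neg (h := 0) le_rfl (by simp at h0; linarith)
  simp only [zero_add] at hA0 hnA
  rw [flaws_cons_true_append hA0 hnA] at hf
  have hcB : A.count true + B.count true = n := by simp at hc; omega
  have hB : IsNM (n - A.count true) m B :=
    isNM_iff.2 ⟨by omega, by simpa [hA0] using h0, hf⟩
  have hk : A.count true < n + 1 - m := by have := flaws_le_count_true B 0; omega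
  have hA : IsNM (A.count true) 0 A := isNM_zero_iff.2 ⟨rfl, hA0, hnA⟩
  exact ⟨⟨⟨A.count true, hk⟩, ⟨A, hA⟩, ⟨B, hB⟩⟩, rfl⟩

lemma exists_downJoin_eq {n m : ℕ} (hm : m ≤ n + 1) {p : Paths (n + 1) m} {l : List Bool}
    (hp : p.1 = false :: l) : ∃ x, downJoin hm x = p := by
  obtain ⟨p, hpNM⟩ := p
  subst hp
  obtain ⟨hc, h0, hf⟩ := isNM_iff.1 hpNM
  obtain ⟨A, B, hl, hA0, hnA⟩ :=
    exists_eq_append_false_of_neg (l := l.map not) (h := 0) le_rfl (by simp at h0 ⊢; linarith)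
  simp only [zero_add] at hA0 hnA
  obtain rfl : l = A.map not ++ true :: B.map not := by
    simpa [Function.comp_def] using congrArg (List.map not) hl
  rw [flaws_cons_false_append hA0 hnA] at hf
  have : A.count false = A.count true := by simp [height] at hA0; omega
  have hcB : A.count true + B.count false = n := by
    simp [count_true_map_not] at hc; omega
  have hB : IsNM (n - A.count true) (m - 1 - A.count true) (B.map not) :=
    isNM_iff.2 ⟨by rw [count_true_map_not]; omega, by simpa [hA0] using h0, by omega⟩
  have hA : IsNM (A.count true) 0 A := isNM_zero_iff.2 ⟨rfl, hA0, hnA⟩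
  exact ⟨⟨⟨A.count true, by omega⟩, ⟨A, hA⟩, ⟨_, hB⟩⟩, rfl⟩

lemma bijective_sumElim_upJoin_downJoin {n m : ℕ} (hm : m ≤ n + 1) :
    Function.Bijective (Sum.elim (upJoin n m) (downJoin hm)) := by
  refine ⟨(upJoin_injective n m).sumElim (downJoin_injective hm) fun x y he => ?_, ?_⟩
  · simpa [upJoin, downJoin] using congrArg Subtype.val he
  · rintro ⟨_ | ⟨b | b, l⟩, hp⟩
    · simp [IsNM] at hp
    · obtain ⟨x, hx⟩ := exists_downJoin_eq hm (p := ⟨_, hp⟩) rfl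
      exact ⟨Sum.inr x, hx⟩
    · obtain ⟨x, hx⟩ := exists_upJoin_eq (p := ⟨_, hp⟩) rfl
      exact ⟨Sum.inl x, hx⟩

open Finset in
lemma card_paths_succ {n m : ℕ} (hm : m ≤ n + 1) :
    Nat.card (Paths (n + 1) m) =
      ∑ k ∈ range (n + 1 - m), Nat.card (Paths k 0) * Nat.card (Paths (n - k) m) +
      ∑ k ∈ range m, Nat.card (Paths k 0) * Nat.card (Paths (n - k) (m - 1 - k)) := by
  rw [← Nat.card_eq_of_bijective _ (bijective_sumElim_upJoin_downJoin hm), Nat.card_sum,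
    Nat.card_sigma, Nat.card_sigma]
  simp only [Nat.card_prod, Finset.sum_range]

lemma card_paths_zero : Nat.card (Paths 0 0) = 1 :=
  Nat.card_eq_one_iff_exists.2
    ⟨⟨[], rfl, rfl, rfl⟩, fun p => Subtype.ext (List.eq_nil_of_length_eq_zero p.2.1)⟩

open Finset in
/-- Uses the symmetry `k ↔ n - k` of the Catalan convolution. -/
lemma sum_add_sum_eq_catalan_succ {n m : ℕ} (hm : m ≤ n + 1) :
    ∑ k ∈ range (n + 1 - m), catalan k * catalan (n - k) +
      ∑ k ∈ range m, catalan k * catalan (n - k) = catalan (n + 1) := by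
  rw [catalan_succ, Fin.sum_univ_eq_sum_range (fun k => catalan k * catalan (n - k)),
    show n.succ = n + 1 - m + m by omega, sum_range_add, ← sum_range_reflect _ m]
  congr 1
  refine sum_congr rfl fun k hk => ?_
  have := mem_range.1 hk
  rw [show n - (m - 1 - k) = n + 1 - m + k by omega, show n - (n + 1 - m + k) = m - 1 - k by omega,
    Nat.mul_comm]

theorem card_paths_eq_catalan {n m : ℕ} (hm : m ≤ n) : Nat.card (Paths n m) = catalan n := by
  induction n using Nat.strong_induction_on generalizing m with
  | _ n ih =>
    rcases n with _ | n
    · obtain rfl := Nat.le_zero.1 hm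
      exact card_paths_zero.trans catalan_zero.symm
    rw [card_paths_succ hm, ← sum_add_sum_eq_catalan_succ hm]
    congr 1 <;> refine Finset.sum_congr rfl fun k hk => ?_ <;> have := Finset.mem_range.1 hk <;>
      rw [ih k (by omega) k.zero_le, ih (n - k) (by omega) (by omega)]

end ChungFeller

theorem stmt_0_general (n m : ℕ) (hm : m ≤ n) :
    (n + 1) * Nat.card {p : List Bool // IsNM n m p} = Nat.choose (2 * n) n := by
  rw [ChungFeller.card_paths_eq_catalan hm, succ_mul_catalan_eq_centralBinom,
    Nat.centralBinom_eq_two_mul_choose]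

/-- Chung–Feller theorem: the number of `(n,m)`-Dyck paths is independent of `m` and
equals the Catalan number `C_n = (1/(n+1)) * C(2n, n)`. -/
theorem stmt_0 (n m : ℕ) (hn : 1 ≤ n) (hm : m ≤ n) :
    (n + 1) * Nat.card {p : List Bool // IsNM n m p} = Nat.choose (2 * n) n :=
  stmt_0_general n m hm
end

section
/- For integers n ≥ 1, 0 ≤ m ≤ n, and 0 ≤ k ≤ n-1, the number of (n,m)-Dyck paths with exactly k double ascents is independent of m and equals the Narayana number (1/(k+1))·C(n-1,k)·C(n,k). -/
/-- The number of double ascents (`UU` factors) of `p`. -/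
def doubleAscents (p : List Bool) : ℕ :=
  (List.range (p.length - 1)).countP fun i => p.getD i false && p.getD (i + 1) false

namespace LatticePath

/-- Height `y - x` reached by the path `w`. -/
def height (w : List Bool) : ℤ := (w.count true : ℤ) - w.count false

/-- `lowUps h w` counts the up steps of `w` that start strictly below the diagonal when `w`
starts at height `h`. -/
def lowUps : ℤ → List Bool → ℕ
  | _, [] => 0
  | h, true :: w => (if h < 0 then 1 else 0) + lowUps (h + 1) w
  | h, false :: w => lowUps (h - 1) w

@[simp] lemma height_nil : height [] = 0 := by simp [height]
@[simp] lemma height_cons_true (w : List Bool) : height (true :: w) = height w + 1 := by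
  rw [height, height, List.count_cons_self, List.count_cons_of_ne (by decide)]; push_cast; ring
@[simp] lemma height_cons_false (w : List Bool) : height (false :: w) = height w - 1 := by
  rw [height, height, List.count_cons_self, List.count_cons_of_ne (by decide)]; push_cast; ring
lemma height_append (x y : List Bool) : height (x ++ y) = height x + height y := by
  simp only [height, List.count_append]; push_cast; ring

lemma lowUps_append (h : ℤ) (x y : List Bool) :
    lowUps h (x ++ y) = lowUps h x + lowUps (h + height x) y := by
  induction x generalizing h with
  | nil => simp [lowUps]
  | cons a x ih =>
    cases a <;> simp only [List.cons_append, lowUps, ih, height_cons_true, height_cons_false]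
    · ring_nf
    · rw [add_assoc]; ring_nf

lemma lowUps_antitone (w : List Bool) {h h' : ℤ} (hh : h ≤ h') : lowUps h' w ≤ lowUps h w := by
  induction w generalizing h h' with
  | nil => simp [lowUps]
  | cons a w ih =>
    cases a
    · exact ih (by omega)
    · have := ih (show h + 1 ≤ h' + 1 by omega)
      simp only [lowUps]
      split_ifs <;> omega

/-- A path from height `h < 0` that ends at height `≥ 0` takes an up step at height `h`. -/
lemma lowUps_succ_lt (w : List Bool) {h : ℤ} (hneg : h < 0) (hend : 0 ≤ h + height w) :
    lowUps (h + 1) w < lowUps h w := by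
  induction w generalizing h with
  | nil => simp only [height_nil, add_zero] at hend; omega
  | cons a w ih =>
    cases a
    · simp only [height_cons_false] at hend
      simpa [lowUps, sub_add_cancel, show h + 1 - 1 = h - 1 + 1 by ring] using
        ih (show h - 1 < 0 by omega) (by omega)
    · simp only [height_cons_true] at hend
      simp only [lowUps, if_pos hneg]
      by_cases h1 : h + 1 < 0
      · have := ih h1 (by omega)
        rw [if_pos h1]; omega
      · rw [if_neg h1]
        have := lowUps_antitone w (show h + 1 ≤ h + 1 + 1 by omega)
        omega

lemma lowUps_le_count (h : ℤ) (w : List Bool) : lowUps h w ≤ w.count true := by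
  induction w generalizing h with
  | nil => simp [lowUps]
  | cons a w ih =>
    cases a
    · simpa [lowUps] using ih (h - 1)
    · have := ih (h + 1)
      simp only [lowUps, List.count_cons_self]
      split_ifs <;> omega

lemma lowUps_eq_countP (h : ℤ) (w : List Bool) :
    lowUps h w = (List.range w.length).countP fun i =>
      w.getD i false && decide (h + height (w.take i) < 0) := by
  induction w generalizing h with
  | nil => simp [lowUps]
  | cons a w ih =>
    rw [List.length_cons, List.range_succ_eq_map, List.countP_cons, List.countP_map]
    cases a <;> simp only [lowUps, ih, Function.comp_def, List.take_succ_cons,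
      List.getD_cons_succ, List.getD_cons_zero, List.take_zero, height_cons_false, height_cons_true,
      height_nil] <;> ring_nf <;> simp [add_comm]

theorem upsBelow_eq_lowUps (w : List Bool) : upsBelow w = lowUps 0 w := by
  simp [lowUps_eq_countP, upsBelow, height]

lemma isNM_iff (n m : ℕ) (w : List Bool) :
    IsNM n m w ↔ w.count true = n ∧ w.count false = n ∧ lowUps 0 w = m := by
  rw [IsNM, upsBelow_eq_lowUps, ← List.count_true_add_count_false]
  constructor <;> rintro ⟨h₁, h₂, h₃⟩ <;> exact ⟨by omega, by omega, h₃⟩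

lemma doubleAscents_cons_cons (a b : Bool) (w : List Bool) :
    doubleAscents (a :: b :: w) = (if a && b then 1 else 0) + doubleAscents (b :: w) := by
  simp only [doubleAscents, List.length_cons, Nat.add_sub_cancel, List.range_succ_eq_map,
    List.countP_cons, List.countP_map]
  simp [Function.comp_def, add_comm]

@[simp] lemma doubleAscents_nil : doubleAscents [] = 0 := rfl
@[simp] lemma doubleAscents_singleton (a : Bool) : doubleAscents [a] = 0 := rfl

@[simp] lemma doubleAscents_cons_false (w : List Bool) :
    doubleAscents (false :: w) = doubleAscents w := by
  cases w with
  | nil => rfl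
  | cons b w => simp [doubleAscents_cons_cons]

@[simp] lemma doubleAscents_cons_true_cons_false (w : List Bool) :
    doubleAscents (true :: false :: w) = doubleAscents w := by
  simp [doubleAscents_cons_cons]

@[simp] lemma doubleAscents_cons_true_cons_true (w : List Bool) :
    doubleAscents (true :: true :: w) = doubleAscents (true :: w) + 1 := by
  simp [doubleAscents_cons_cons, add_comm]

lemma doubleAscents_append_cons_false (x y : List Bool) :
    doubleAscents (x ++ false :: y) = doubleAscents x + doubleAscents y := by
  induction x with
  | nil => simp
  | cons a x ih =>
    cases x with
    | nil => cases a <;> simp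
    | cons b x =>
      simp only [List.cons_append] at ih ⊢
      rw [doubleAscents_cons_cons, ih, doubleAscents_cons_cons]
      ring

lemma lowUps_swap_lt {X Y : List Bool} (hXY : height X + height Y = 1) (hX : height X ≤ 0) :
    lowUps 0 (Y ++ false :: X) < lowUps 0 (X ++ false :: Y) := by
  simp only [lowUps_append, lowUps, zero_add]
  have hXX : lowUps (height Y - 1) X ≤ lowUps 0 X := lowUps_antitone X (by omega)
  have hY₁ : lowUps 0 Y ≤ lowUps (height X - 1 + 1) Y := lowUps_antitone Y (by omega)
  have hY₂ : lowUps (height X - 1 + 1) Y < lowUps (height X - 1) Y :=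
    lowUps_succ_lt Y (by omega) (by omega)
  omega

lemma lowUps_swap_ne {X Y : List Bool} (hXY : height X + height Y = 1) :
    lowUps 0 (X ++ false :: Y) ≠ lowUps 0 (Y ++ false :: X) := by
  rcases le_or_gt (height X) 0 with hX | hX
  · exact (lowUps_swap_lt hXY hX).ne'
  · exact (lowUps_swap_lt (by omega) (by omega : height Y ≤ 0)).ne

/-- `w = beforeFalse w d ++ false :: afterFalse w d` splits `w` at its `d`-th down step, counting
from `0`. -/
def beforeFalse : List Bool → ℕ → List Bool
  | [], _ => []
  | false :: _, 0 => []
  | false :: w, d + 1 => false :: beforeFalse w d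
  | true :: w, d => true :: beforeFalse w d

def afterFalse : List Bool → ℕ → List Bool
  | [], _ => []
  | false :: w, 0 => w
  | false :: w, d + 1 => afterFalse w d
  | true :: w, d => afterFalse w d

lemma exists_eq_append_cons_false {w : List Bool} {d : ℕ} (h : d < w.count false) :
    ∃ c a, c.count false = d ∧ w = c ++ false :: a := by
  refine ⟨beforeFalse w d, afterFalse w d, ?_⟩
  induction w generalizing d with
  | nil => simp at h
  | cons b w ih =>
    cases b
    · cases d with
      | zero => simp [beforeFalse, afterFalse]
      | succ d =>
        obtain ⟨hc, hw⟩ := ih (d := d) (by simpa using h)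
        simp [beforeFalse, afterFalse, hc, ← hw]
    · obtain ⟨hc, hw⟩ := ih (d := d) (by simpa using h)
      cases d <;> simp [beforeFalse, afterFalse, hc, ← hw]

lemma beforeFalse_afterFalse_append (c a : List Bool) :
    beforeFalse (c ++ false :: a) (c.count false) = c ∧
      afterFalse (c ++ false :: a) (c.count false) = a := by
  induction c with
  | nil => simp [beforeFalse, afterFalse]
  | cons b c ih =>
    cases b
    · simpa [beforeFalse, afterFalse] using ih
    · cases h : c.count false <;> simp_all [beforeFalse, afterFalse]

/-- Writing `w = B₀ D B₁ D ⋯ D Bₙ` with `D = false` and blocks `Bᵢ` free of `D`,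
`rotateBlocks w r` is `Bᵣ D ⋯ D Bₙ D B₀ D ⋯ D Bᵣ₋₁` for `r ≤ n`. -/
def rotateBlocks (w : List Bool) : ℕ → List Bool
  | 0 => w
  | d + 1 => if d < w.count false then afterFalse w d ++ false :: beforeFalse w d else w

lemma rotateBlocks_append_cons_false (c a : List Bool) :
    rotateBlocks (c ++ false :: a) (c.count false + 1) = a ++ false :: c := by
  obtain ⟨hc, ha⟩ := beforeFalse_afterFalse_append c a
  simp [rotateBlocks, List.count_append, hc, ha]

lemma rotateBlocks_eq_or (w : List Bool) (r : ℕ) :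
    rotateBlocks w r = w ∨
      ∃ c a, w = c ++ false :: a ∧ rotateBlocks w r = a ++ false :: c := by
  cases r with
  | zero => exact Or.inl rfl
  | succ d =>
    by_cases h : d < w.count false
    · obtain ⟨c, a, rfl, rfl⟩ := exists_eq_append_cons_false h
      exact Or.inr ⟨c, a, rfl, rotateBlocks_append_cons_false c a⟩
    · exact Or.inl (if_neg h)

lemma count_rotateBlocks (w : List Bool) (r : ℕ) (b : Bool) :
    (rotateBlocks w r).count b = w.count b := by
  obtain h | ⟨c, a, rfl, h⟩ := rotateBlocks_eq_or w r
  · rw [h]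
  · simp only [h, List.count_append, List.count_cons]
    omega

lemma rotateBlocks_neg {n : ℕ} {w : List Bool} (hw : w.count false = n) (r : Fin (n + 1)) :
    rotateBlocks (rotateBlocks w r) ↑(-r) = w := by
  rcases Fin.eq_zero_or_eq_succ r with rfl | ⟨d, rfl⟩
  · simp [rotateBlocks]
  · obtain ⟨c, a, hc, rfl⟩ := exists_eq_append_cons_false (w := w) (d := d) (by omega)
    have ha : a.count false + 1 = ↑(-d.succ) := by
      simp only [List.count_append, List.count_cons_self] at hw
      rw [Fin.val_neg, if_neg (Fin.succ_ne_zero d), Fin.val_succ]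
      omega
    rw [Fin.val_succ, ← hc, rotateBlocks_append_cons_false, ← ha,
      rotateBlocks_append_cons_false]

lemma exists_rotateBlocks_swap {n : ℕ} {w : List Bool} (hw : w.count false = n) {r r' : ℕ}
    (hr : r < r') (hr' : r' ≤ n) :
    ∃ X Y, rotateBlocks w r = X ++ false :: Y ∧ rotateBlocks w r' = Y ++ false :: X := by
  obtain ⟨d', rfl⟩ : ∃ d', r' = d' + 1 := ⟨r' - 1, by omega⟩
  cases r with
  | zero =>
    obtain ⟨c, a, hc, rfl⟩ := exists_eq_append_cons_false (w := w) (d := d') (by omega)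
    exact ⟨c, a, rfl, hc ▸ rotateBlocks_append_cons_false c a⟩
  | succ d =>
    obtain ⟨A, R, hA, rfl⟩ := exists_eq_append_cons_false (w := w) (d := d) (by omega)
    simp only [List.count_append, List.count_cons_self] at hw
    obtain ⟨M, B, hM, rfl⟩ := exists_eq_append_cons_false (w := R) (d := d' - d - 1) (by omega)
    refine ⟨M, B ++ false :: A, ?_, ?_⟩
    · rw [← hA, rotateBlocks_append_cons_false]
      simp
    · have hAM : (A ++ false :: M).count false + 1 = d' + 1 := by
        simp only [List.count_append, List.count_cons_self]
        omega
      rw [← hAM, show A ++ false :: (M ++ false :: B) = (A ++ false :: M) ++ false :: B by simp,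
        rotateBlocks_append_cons_false]
      simp

lemma lowUps_rotateBlocks_injective {n : ℕ} {w : List Bool} (hT : w.count true = n)
    (hF : w.count false = n) :
    Function.Injective fun r : Fin (n + 1) => lowUps 0 (rotateBlocks w r) := by
  suffices key : ∀ r r' : ℕ, r < r' → r' ≤ n →
      lowUps 0 (rotateBlocks w r) ≠ lowUps 0 (rotateBlocks w r') by
    intro r r' h
    rcases lt_trichotomy r r' with hlt | heq | hgt
    · exact absurd h (key r r' hlt (by omega))
    · exact heq
    · exact absurd h.symm (key r' r hgt (by omega))
  intro r r' hr hr'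
  obtain ⟨X, Y, hXY, hYX⟩ := exists_rotateBlocks_swap hF hr hr'
  have hheight : height (X ++ false :: Y) = 0 := by
    simp [← hXY, height, count_rotateBlocks, hT, hF]
  rw [hXY, hYX]
  exact lowUps_swap_ne (by simp only [height_append, height_cons_false] at hheight; omega)

theorem card_eq_succ_mul_card_lowUps_eq {n m : ℕ} (hm : m ≤ n) (Q : List Bool → Prop)
    (hQ : ∀ c a, Q (c ++ false :: a) → Q (a ++ false :: c)) :
    Nat.card {w : List Bool // w.count true = n ∧ w.count false = n ∧ Q w} =
      (n + 1) * Nat.card {w : List Bool //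
        (w.count true = n ∧ w.count false = n ∧ Q w) ∧ lowUps 0 w = m} := by
  set P := fun w : List Bool => w.count true = n ∧ w.count false = n ∧ Q w
  have hP : ∀ w r, P w → P (rotateBlocks w r) := by
    rintro w r ⟨hT, hF, hw⟩
    refine ⟨by rw [count_rotateBlocks, hT], by rw [count_rotateBlocks, hF], ?_⟩
    obtain h | ⟨c, a, rfl, h⟩ := rotateBlocks_eq_or w r
    · rwa [h]
    · exact h ▸ hQ c a hw
  let Φ : {w // P w ∧ lowUps 0 w = m} × Fin (n + 1) → {w // P w} :=
    fun x => ⟨rotateBlocks x.1 x.2, hP _ _ x.1.2.1⟩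
  have hΦ : Function.Bijective Φ := by
    constructor
    · rintro ⟨⟨u, hu, hum⟩, r⟩ ⟨⟨u', hu', hum'⟩, r'⟩ h
      have hv : rotateBlocks u r = rotateBlocks u' r' := congrArg Subtype.val h
      have hvT : (rotateBlocks u r).count true = n := by rw [count_rotateBlocks, hu.1]
      have hvF : (rotateBlocks u r).count false = n := by rw [count_rotateBlocks, hu.2.1]
      have hu_eq := rotateBlocks_neg hu.2.1 r
      have hu'_eq := rotateBlocks_neg hu'.2.1 r'
      rw [← hv] at hu'_eq
      have hr : -r = -r' := lowUps_rotateBlocks_injective hvT hvF <| by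
        simp only [hu_eq, hu'_eq, hum, hum']
      obtain rfl := neg_injective hr
      obtain rfl : u = u' := hu_eq.symm.trans hu'_eq
      rfl
    · rintro ⟨v, hv⟩
      let g : Fin (n + 1) → Fin (n + 1) := fun r =>
        ⟨lowUps 0 (rotateBlocks v r), Nat.lt_succ_of_le <|
          (lowUps_le_count 0 _).trans (by rw [count_rotateBlocks, hv.1])⟩
      have hg : Function.Injective g := fun r r' h =>
        lowUps_rotateBlocks_injective hv.1 hv.2.1 (congrArg Fin.val h)
      obtain ⟨s, hs⟩ := Finite.surjective_of_injective hg ⟨m, Nat.lt_succ_of_le hm⟩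
      refine ⟨⟨⟨rotateBlocks v s, hP _ _ hv, congrArg Fin.val hs⟩, -s⟩, Subtype.ext ?_⟩
      exact rotateBlocks_neg hv.2.1 s
  rw [← Nat.card_eq_of_bijective Φ hΦ, Nat.card_prod, Nat.card_fin, mul_comm]

def consEquiv (P : List Bool → Prop) :
    {w // P w} ≃ {_u : Unit // P []} ⊕ ({w // P (false :: w)} ⊕ {w // P (true :: w)}) where
  toFun
    | ⟨[], h⟩ => .inl ⟨(), h⟩
    | ⟨false :: w, h⟩ => .inr (.inl ⟨w, h⟩)
    | ⟨true :: w, h⟩ => .inr (.inr ⟨w, h⟩)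
  invFun
    | .inl ⟨_, h⟩ => ⟨[], h⟩
    | .inr (.inl ⟨w, h⟩) => ⟨false :: w, h⟩
    | .inr (.inr ⟨w, h⟩) => ⟨true :: w, h⟩
  left_inv := by rintro ⟨_ | ⟨_ | _, w⟩, h⟩ <;> rfl
  right_inv := by rintro (_ | _ | _) <;> rfl

lemma natCard_subtype_list (P : List Bool → Prop) [Decidable (P [])] [Finite {w // P w}] :
    Nat.card {w // P w} = (if P [] then 1 else 0) + Nat.card {w // P (false :: w)} +
      Nat.card {w // P (true :: w)} := by
  have : Finite ({_u : Unit // P []} ⊕ ({w // P (false :: w)} ⊕ {w // P (true :: w)})) :=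
    .of_equiv _ (consEquiv P)
  have : Finite ({w // P (false :: w)} ⊕ {w // P (true :: w)}) :=
    Finite.sum_right {_u : Unit // P []}
  have : Finite {w // P (false :: w)} := Finite.sum_left {w // P (true :: w)}
  have : Finite {w // P (true :: w)} := Finite.sum_right {w // P (false :: w)}
  rw [Nat.card_congr (consEquiv P), Nat.card_sum, Nat.card_sum, add_assoc]
  split_ifs with h <;> simp [h]

noncomputable def pathCount (P : List Bool → Prop) (p q : ℕ) : ℕ :=
  Nat.card {w : List Bool // w.count true = p ∧ w.count false = q ∧ P w}

instance finite_subtype_count (P : List Bool → Prop) (p q : ℕ) :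
    Finite {w : List Bool // w.count true = p ∧ w.count false = q ∧ P w} :=
  have : Finite {w : List Bool // w.length = p + q} :=
    (List.finite_length_eq Bool (p + q)).to_subtype
  Finite.of_injective
    (fun w => (⟨w.1, by rw [← List.count_true_add_count_false, w.2.1, w.2.2.1]⟩ :
      {w : List Bool // w.length = p + q}))
    fun _ _ h => Subtype.ext (Subtype.mk.inj h)

lemma pathCount_zero_zero (P : List Bool → Prop) [Decidable (P [])] :
    pathCount P 0 0 = if P [] then 1 else 0 := by
  rw [pathCount, natCard_subtype_list]
  simp

lemma pathCount_succ_zero (P : List Bool → Prop) (p : ℕ) :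
    pathCount P (p + 1) 0 = pathCount (fun w => P (true :: w)) p 0 := by
  classical
  rw [pathCount, natCard_subtype_list]
  simp [pathCount]

lemma pathCount_zero_succ (P : List Bool → Prop) (q : ℕ) :
    pathCount P 0 (q + 1) = pathCount (fun w => P (false :: w)) 0 q := by
  classical
  rw [pathCount, natCard_subtype_list]
  simp [pathCount]

lemma pathCount_succ_succ (P : List Bool → Prop) (p q : ℕ) :
    pathCount P (p + 1) (q + 1) =
      pathCount (fun w => P (false :: w)) (p + 1) q +
        pathCount (fun w => P (true :: w)) p (q + 1) := by
  classical
  rw [pathCount, natCard_subtype_list]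
  simp [pathCount]

lemma pathCount_false (p q : ℕ) : pathCount (fun _ => False) p q = 0 := by
  simp [pathCount]

/-- `C(q + 1, p - k) C(p - 1, k)` counts the paths with `p` up steps, `q` down steps and `k` double
ascents (choose the `p - k` runs of up steps among the `q + 1` gaps, then their lengths); when the
path follows an up step, the first run is glued to it. -/
theorem pathCount_doubleAscents (p q k : ℕ) :
    pathCount (fun w => doubleAscents w = k) p q = (q + 1).choose (p - k) * (p - 1).choose k ∧
      pathCount (fun w => doubleAscents (true :: w) = k) p q = q.choose (p - k) * p.choose k := by
  induction p generalizing q k with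
  | zero =>
    induction q generalizing k with
    | zero => cases k <;> simp [pathCount_zero_zero]
    | succ q ihq => simp [pathCount_zero_succ, (ihq k).1]
  | succ p ihp =>
    induction q generalizing k with
    | zero =>
      simp only [pathCount_succ_zero, (ihp 0 k).2]
      constructor
      · rcases le_or_gt k p with hk | hk
        · obtain ⟨j, rfl⟩ := Nat.exists_eq_add_of_le hk
          simp [show k + j + 1 - k = j + 1 by omega, Nat.choose_succ_succ]
        · simp [Nat.choose_eq_zero_of_lt hk]
      · cases k with
        | zero => simp [pathCount_false]
        | succ k =>
          simp only [doubleAscents_cons_true_cons_true, Nat.add_right_cancel_iff, (ihp 0 k).2]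
          rcases lt_trichotomy p k with hk | rfl | hk
          · simp [Nat.choose_eq_zero_of_lt hk, Nat.choose_eq_zero_of_lt (Nat.succ_lt_succ hk)]
          · simp
          · simp [Nat.choose_eq_zero_of_lt (show 0 < p - k by omega),
              show p + 1 - (k + 1) = p - k by omega]
    | succ q ihq =>
      simp only [pathCount_succ_succ, doubleAscents_cons_false,
        doubleAscents_cons_true_cons_false, (ihq k).1, (ihp (q + 1) k).2, Nat.add_sub_cancel]
      constructor
      · rcases le_or_gt k p with hk | hk
        · rw [show p + 1 - k = p - k + 1 by omega, Nat.choose_succ_succ (q + 1)]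
          ring
        · simp [Nat.choose_eq_zero_of_lt hk]
      · cases k with
        | zero => simp [pathCount_false]
        | succ k =>
          simp only [doubleAscents_cons_true_cons_true, Nat.add_right_cancel_iff,
            (ihp (q + 1) k).2, Nat.choose_succ_succ p k]
          rw [show p + 1 - (k + 1) = p - k by omega]
          ring

theorem succ_mul_card_isNM_doubleAscents {n m : ℕ} (hm : m ≤ n) (k : ℕ) :
    (n + 1) * Nat.card {p : List Bool // IsNM n m p ∧ doubleAscents p = k} =
      (n + 1).choose (n - k) * (n - 1).choose k := by
  have hswap : ∀ c a, doubleAscents (c ++ false :: a) = k → doubleAscents (a ++ false :: c) = k :=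
    fun c a h => by
      rwa [doubleAscents_append_cons_false, add_comm, ← doubleAscents_append_cons_false]
  rw [← (pathCount_doubleAscents n n k).1, pathCount, card_eq_succ_mul_card_lowUps_eq hm _ hswap]
  congr 1
  exact Nat.card_congr <| Equiv.subtypeEquivRight fun w => by rw [isNM_iff]; tauto

end LatticePath

theorem stmt_1_general (n m k : ℕ) (hm : m ≤ n) :
    (k + 1) * Nat.card {p : List Bool // IsNM n m p ∧ doubleAscents p = k} =
      Nat.choose (n - 1) k * Nat.choose n k := by
  have hcount := LatticePath.succ_mul_card_isNM_doubleAscents hm k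
  rcases le_or_gt k n with hk | hk
  · apply Nat.eq_of_mul_eq_mul_left n.succ_pos
    rw [Nat.choose_symm_of_eq_add (show n + 1 = (n - k) + (k + 1) by omega)] at hcount
    calc (n + 1) * ((k + 1) * Nat.card {p : List Bool // IsNM n m p ∧ doubleAscents p = k})
        = (k + 1) * ((n + 1).choose (k + 1) * (n - 1).choose k) := by rw [← hcount]; ring
      _ = ((n + 1).choose (k + 1) * (k + 1)) * (n - 1).choose k := by ring
      _ = (n + 1) * ((n - 1).choose k * n.choose k) := by rw [← Nat.add_one_mul_choose_eq]; ring
  · simpa [Nat.choose_eq_zero_of_lt hk, Nat.choose_eq_zero_of_lt (show n - 1 < k by omega)]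
      using hcount

/-- The number of `(n,m)`-Dyck paths with exactly `k` double ascents is independent of `m`
and equals the Narayana number `(1/(k+1)) * C(n-1,k) * C(n,k)`. -/
theorem stmt_1 (n m k : ℕ) (hn : 1 ≤ n) (hm : m ≤ n) (hk : k ≤ n - 1) :
    (k + 1) * Nat.card {p : List Bool // IsNM n m p ∧ doubleAscents p = k} =
      Nat.choose (n - 1) k * Nat.choose n k :=
  stmt_1_general n m k hm
end

section
/- For integers n ≥ 1, 0 ≤ m ≤ n, and 1 ≤ k ≤ n, the number of (n,m)-Dyck paths with exactly k peaks equals the number of (n,n-m)-Dyck paths with exactly n-k peaks. -/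
/-!
Record each peak of a path from `(0,0)` to `(n,n)` by the starting point `(x, y)` of its up step.
Along the path both coordinates strictly increase from peak to peak, so the peaks of a path with
`k` peaks form a pair `(X, Y)` of `k`-subsets of `{0, …, n-1}`; the path is recovered from the
pair, and counting shows that every such pair occurs. The up step with index `h` lies below the
diagonal iff `#{x ∈ X | x ≤ h} ≤ #{y ∈ Y | y < h}`. Replacing `X` and `Y` by their complements in
`{0, …, n-1}` turns `k` into `n - k` and negates this condition for every `h < n`, so it turns `m`
into `n - m`.
-/

open Finset

namespace LatticePath

lemma peaks_cons (a : Bool) (l : List Bool) :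
    peaks (a :: l) = peaks l + if a = true ∧ l.head? = some false then 1 else 0 := by
  rcases l with _ | ⟨b, l⟩
  · cases a <;> rfl
  · simp only [peaks, List.length_cons, Nat.add_sub_cancel, List.range_succ_eq_map,
      List.countP_cons, List.countP_map]
    cases a <;> cases b <;> simp [Function.comp_def]

/-- The x-coordinate of the up step of `p` with index `h` (counting from `0`). -/
def upX : List Bool → ℕ → ℕ
  | [], _ => 0
  | false :: l, h => upX l h + 1
  | true :: _, 0 => 0
  | true :: l, h + 1 => upX l h

/-- `u` and `d` are the numbers of up and down steps taken before `p` starts. -/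
lemma countP_upsBelow_offset (p : List Bool) (u d : ℕ) :
    (List.range p.length).countP (fun i => p.getD i false &&
        decide (u + (p.take i).count true < d + (p.take i).count false)) =
      (List.range (p.count true)).countP fun h => decide (u + h < d + upX p h) := by
  induction p generalizing u d with
  | nil => rfl
  | cons a l ih =>
    simp only [List.length_cons, List.range_succ_eq_map, List.countP_cons, List.countP_map,
      Function.comp_def, List.getD_cons_succ, List.getD_cons_zero, List.take_succ_cons,
      List.take_zero, List.count_nil]
    cases a
    · simp only [List.count_cons_self, List.count_cons_of_ne Bool.false_ne_true,
        Bool.false_and, Bool.false_eq_true, if_false, add_zero]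
      convert ih u (d + 1) using 4 <;> simp only [upX, decide_eq_decide] <;> omega
    · simp only [List.count_cons_self, List.count_cons_of_ne (Bool.false_ne_true).symm,
        Bool.true_and, List.range_succ_eq_map, List.countP_cons, List.countP_map,
        Function.comp_def]
      convert congrArg (· + if u < d then 1 else 0) (ih (u + 1) d) using 5 <;>
        simp [upX] <;> omega

lemma upsBelow_eq_card_lt_upX (p : List Bool) :
    upsBelow p = #{h ∈ range (p.count true) | h < upX p h} := by
  rw [← List.toFinset_range, (List.nodup_range).card_eq_countP]
  simpa [upsBelow] using countP_upsBelow_offset p 0 0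

/-- A peak is recorded by the starting point `(x, y)` of its up step: `peakXs` collects the `x`,
`peakYs` the `y`. -/
def peakXs : List Bool → Finset ℕ
  | [] => ∅
  | false :: l => (peakXs l).map (addRightEmbedding 1)
  | true :: l => if l.head? = some false then insert 0 (peakXs l) else peakXs l

def peakYs : List Bool → Finset ℕ
  | [] => ∅
  | false :: l => peakYs l
  | true :: l => if l.head? = some false then insert 0 ((peakYs l).map (addRightEmbedding 1))
      else (peakYs l).map (addRightEmbedding 1)

def peakSets (p : List Bool) : Finset ℕ × Finset ℕ := (peakXs p, peakYs p)

lemma card_peakXs (p : List Bool) : #(peakXs p) = peaks p := by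
  induction p with
  | nil => rfl
  | cons a l ih =>
    rw [peaks_cons, ← ih]
    rcases a with _ | _
    · simp [peakXs]
    · by_cases hl : l.head? = some false
      · obtain ⟨l, rfl⟩ := List.head?_eq_some_iff.1 hl
        simp [peakXs]
      · simp [peakXs, hl]

lemma card_peakYs (p : List Bool) : #(peakYs p) = peaks p := by
  induction p with
  | nil => rfl
  | cons a l ih =>
    rw [peaks_cons, ← ih]
    rcases a with _ | _
    · simp [peakYs]
    · by_cases hl : l.head? = some false <;> simp [peakYs, hl]

lemma peakXs_subset (p : List Bool) : peakXs p ⊆ range (p.count false) := by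
  induction p with
  | nil => simp [peakXs]
  | cons a l ih =>
    intro x hx
    rcases a with _ | _
    · simp only [peakXs, mem_map, addRightEmbedding_apply] at hx
      obtain ⟨x, hx, rfl⟩ := hx
      simpa using ih hx
    · simp only [peakXs] at hx
      split_ifs at hx with hl
      · obtain ⟨l, rfl⟩ := List.head?_eq_some_iff.1 hl
        rcases mem_insert.1 hx with rfl | hx
        · simp
        · simpa using ih hx
      · simpa using ih hx

lemma peakYs_subset (p : List Bool) : peakYs p ⊆ range (p.count true) := by
  induction p with
  | nil => simp [peakYs]
  | cons a l ih =>
    intro y hy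
    rcases a with _ | _
    · simpa using ih (by simpa [peakYs] using hy)
    · simp only [peakYs] at hy
      split_ifs at hy <;> simp at hy ⊢ <;> grind

lemma zero_mem_peakXs_cons_true {l : List Bool} (hl : false ∈ l) : 0 ∈ peakXs (true :: l) := by
  induction l with
  | nil => simp at hl
  | cons a l ih =>
    rcases a with _ | _
    · simp [peakXs]
    · simpa [peakXs] using ih (by simpa using hl)

/-- Peaks are ordered by both coordinates, so up step `h` starts right of column `t` iff every peak
in the columns `≤ t` precedes it. -/
lemma lt_upX_iff (p : List Bool) {t : ℕ} (ht : t < p.count false) (h : ℕ) :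
    t < upX p h ↔ #{x ∈ peakXs p | x ≤ t} ≤ #{y ∈ peakYs p | y < h} := by
  induction p generalizing t h with
  | nil => simp at ht
  | cons a l ih =>
    rcases a with _ | _
    · rcases t with _ | t
      · simp [upX, peakXs, filter_map]
      · simpa [upX, peakXs, peakYs, filter_map] using ih (by simpa using ht) h
    · have ht' : t < l.count false := by simpa using ht
      rcases h with _ | h
      · simpa [upX] using
          ⟨0, zero_mem_peakXs_cons_true (List.count_pos_iff.1 (by omega)), Nat.zero_le t⟩
      · by_cases hl : l.head? = some false
        · obtain ⟨l, rfl⟩ := List.head?_eq_some_iff.1 hl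
          rw [upX, ih ht' h]
          simp [peakXs, peakYs, filter_insert, filter_map]
        · simpa [upX, peakXs, peakYs, hl, filter_map] using ih ht' h

lemma upX_le_count_false (p : List Bool) (h : ℕ) : upX p h ≤ p.count false := by
  induction p generalizing h with
  | nil => simp [upX]
  | cons a l ih =>
    rcases a with _ | _
    · simpa [upX] using ih h
    · rcases h with _ | h
      · simp [upX]
      · simpa [upX] using ih h

lemma eq_of_upX_eq {p q : List Bool} (hl : p.length = q.length)
    (hc : p.count true = q.count true) (hx : upX p = upX q) : p = q := by
  induction p generalizing q with
  | nil => simpa [eq_comm] using hl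
  | cons a l ih =>
    rcases q with _ | ⟨b, q⟩
    · simp at hl
    have tail_eq (hab : a = b) (hx' : upX l = upX q) : l = q :=
      ih (by simpa using hl) (by subst hab; simpa [List.count_cons] using hc) hx'
    rcases a with _ | _ <;> rcases b with _ | _
    · simpa using tail_eq rfl (funext fun h => by simpa [upX] using congrFun hx h)
    · simpa [upX] using congrFun hx 0
    · simpa [upX] using (congrFun hx 0).symm
    · simpa using tail_eq rfl (funext fun h => by simpa [upX] using congrFun hx (h + 1))

lemma upX_le_upX_of_peakSets_eq {p q : List Bool} (hc : p.count false = q.count false)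
    (hpq : peakSets p = peakSets q) (h : ℕ) : upX p h ≤ upX q h := by
  have hX : peakXs p = peakXs q := congrArg Prod.fst hpq
  have hY : peakYs p = peakYs q := congrArg Prod.snd hpq
  by_contra! hlt
  have ht : upX q h < p.count false := hlt.trans_le (upX_le_count_false p h)
  have hq := (lt_upX_iff p ht h).1 hlt
  rw [hX, hY, ← lt_upX_iff q (hc ▸ ht) h] at hq
  exact lt_irrefl _ hq

def paths (n : ℕ) : Set (List Bool) := {p | p.length = 2 * n ∧ p.count true = n}

lemma count_false_of_mem_paths {n : ℕ} {p : List Bool} (hp : p ∈ paths n) :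
    p.count false = n := by
  have := List.count_true_add_count_false p
  rw [hp.1, hp.2] at this
  omega

lemma paths_finite (n : ℕ) : (paths n).Finite :=
  (List.finite_length_eq Bool (2 * n)).subset fun _ hp => hp.1

def peakPairs (n : ℕ) : Set (Finset ℕ × Finset ℕ) :=
  {q | q.1 ⊆ range n ∧ q.2 ⊆ range n ∧ #q.1 = #q.2}

lemma peakPairs_finite (n : ℕ) : (peakPairs n).Finite :=
  ((range n).powerset ×ˢ (range n).powerset).finite_toSet.subset fun _ hq =>
    mem_coe.2 (mem_product.2 ⟨mem_powerset.2 hq.1, mem_powerset.2 hq.2.1⟩)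

lemma mapsTo_peakSets (n : ℕ) : Set.MapsTo peakSets (paths n) (peakPairs n) := fun p hp =>
  ⟨count_false_of_mem_paths hp ▸ peakXs_subset p, hp.2 ▸ peakYs_subset p,
    by rw [peakSets, card_peakXs, card_peakYs]⟩

lemma injOn_peakSets (n : ℕ) : Set.InjOn peakSets (paths n) := by
  intro p hp q hq hpq
  have hc : p.count false = q.count false := by
    rw [count_false_of_mem_paths hp, count_false_of_mem_paths hq]
  refine eq_of_upX_eq (by rw [hp.1, hq.1]) (by rw [hp.2, hq.2]) (funext fun h => ?_)
  exact le_antisymm (upX_le_upX_of_peakSets_eq hc hpq h)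
    (upX_le_upX_of_peakSets_eq hc.symm hpq.symm h)

lemma count_true_map_range (n : ℕ) (f : ℕ → Prop) [DecidablePred f] :
    ((List.range n).map fun i => decide (f i)).count true = #{i ∈ range n | f i} := by
  rw [← List.toFinset_range, (List.nodup_range).card_eq_countP]
  simp [List.count_eq_countP, List.countP_map, Function.comp_def]

/-- An injection of `peakPairs n` into `paths n`, needed only to compare cardinalities. -/
def pathCode (n : ℕ) (q : Finset ℕ × Finset ℕ) : List Bool :=
  (List.range n).map (fun i => decide (i ∉ q.1)) ++ (List.range n).map fun i => decide (i ∈ q.2)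

lemma mapsTo_pathCode (n : ℕ) : Set.MapsTo (pathCode n) (peakPairs n) (paths n) := by
  rintro ⟨X, Y⟩ ⟨hX : X ⊆ range n, hY : Y ⊆ range n, hXY : #X = #Y⟩
  refine ⟨by simp [pathCode, two_mul], ?_⟩
  rw [pathCode, List.count_append, count_true_map_range, count_true_map_range,
    filter_notMem_eq_sdiff, filter_mem_eq_inter, inter_eq_right.2 hY, card_sdiff_of_subset hX,
    card_range]
  have := card_range n ▸ card_le_card hY
  omega

lemma injOn_pathCode (n : ℕ) : Set.InjOn (pathCode n) (peakPairs n) := by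
  rintro ⟨X, Y⟩ ⟨hX, hY, -⟩ ⟨X', Y'⟩ ⟨hX', hY', -⟩ h
  obtain ⟨h1, h2⟩ := List.append_inj h (by simp)
  simp only [List.map_inj_left, List.mem_range, decide_eq_decide, not_iff_not] at h1 h2
  have ext_of {S T : Finset ℕ} (hS : S ⊆ range n) (hT : T ⊆ range n)
      (h : ∀ i < n, i ∈ S ↔ i ∈ T) : S = T := by
    ext i
    by_cases hi : i < n
    · exact h i hi
    · exact iff_of_false (fun hiS => hi (mem_range.1 (hS hiS)))
        fun hiT => hi (mem_range.1 (hT hiT))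
  exact Prod.ext (ext_of hX hX' h1) (ext_of hY hY' h2)

lemma image_peakSets_paths (n : ℕ) : peakSets '' paths n = peakPairs n :=
  Set.eq_of_subset_of_ncard_le (mapsTo_peakSets n).image_subset
    (by
      rw [(injOn_peakSets n).ncard_image]
      exact Set.ncard_le_ncard_of_injOn _ (mapsTo_pathCode n) (injOn_pathCode n) (paths_finite n))
    (peakPairs_finite n)

def upsBelowOfPeaks (n : ℕ) (q : Finset ℕ × Finset ℕ) : ℕ :=
  #{h ∈ range n | #{x ∈ q.1 | x ≤ h} ≤ #{y ∈ q.2 | y < h}}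

lemma upsBelow_eq_upsBelowOfPeaks {n : ℕ} {p : List Bool} (hp : p ∈ paths n) :
    upsBelow p = upsBelowOfPeaks n (peakSets p) := by
  rw [upsBelow_eq_card_lt_upX, hp.2, upsBelowOfPeaks]
  refine congrArg card (filter_congr fun h hh => lt_upX_iff p ?_ h)
  rw [count_false_of_mem_paths hp]
  exact mem_range.1 hh

lemma pC_eq_ncard (n m k : ℕ) :
    pC n m k = {q ∈ peakPairs n | upsBelowOfPeaks n q = m ∧ #q.1 = k}.ncard := by
  change Nat.card {p | IsNM n m p ∧ peaks p = k} = _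
  rw [Nat.card_coe_set_eq]
  refine Set.ncard_congr (fun p _ => peakSets p) ?_ ?_ ?_
  · rintro p ⟨⟨hl, hc, hm⟩, hk⟩
    have hp : p ∈ paths n := ⟨hl, hc⟩
    exact ⟨mapsTo_peakSets n hp, by rw [← upsBelow_eq_upsBelowOfPeaks hp, hm],
      by rw [peakSets, card_peakXs, hk]⟩
  · exact fun p q hp hq => injOn_peakSets n ⟨hp.1.1, hp.1.2.1⟩ ⟨hq.1.1, hq.1.2.1⟩
  · rintro q ⟨hq, hm, hk⟩
    rw [← image_peakSets_paths] at hq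
    obtain ⟨p, hp, rfl⟩ := hq
    exact ⟨p, ⟨⟨hp.1, hp.2, by rw [upsBelow_eq_upsBelowOfPeaks hp, hm]⟩, by
      rw [← card_peakXs]; exact hk⟩, rfl⟩

lemma card_filter_sdiff_add_card_filter {α : Type*} [DecidableEq α] {s t : Finset α}
    (h : t ⊆ s) (P : α → Prop) [DecidablePred P] :
    #{x ∈ s \ t | P x} + #{x ∈ t | P x} = #{x ∈ s | P x} := by
  rw [← card_union_of_disjoint (disjoint_filter_filter sdiff_disjoint), ← filter_union,
    sdiff_union_of_subset h]

def complPair (n : ℕ) (q : Finset ℕ × Finset ℕ) : Finset ℕ × Finset ℕ :=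
  (range n \ q.1, range n \ q.2)

lemma complPair_mem_peakPairs {n : ℕ} {q : Finset ℕ × Finset ℕ} (hq : q ∈ peakPairs n) :
    complPair n q ∈ peakPairs n :=
  ⟨sdiff_subset, sdiff_subset, by simp [complPair, card_sdiff_of_subset hq.1,
    card_sdiff_of_subset hq.2.1, hq.2.2]⟩

lemma complPair_complPair {n : ℕ} {q : Finset ℕ × Finset ℕ} (hq : q ∈ peakPairs n) :
    complPair n (complPair n q) = q := by
  simp [complPair, Finset.sdiff_sdiff_eq_self hq.1, Finset.sdiff_sdiff_eq_self hq.2.1]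

lemma card_complPair_fst {n : ℕ} {q : Finset ℕ × Finset ℕ} (hq : q ∈ peakPairs n) :
    #(complPair n q).1 = n - #q.1 := by
  simp [complPair, card_sdiff_of_subset hq.1]

lemma upsBelowOfPeaks_complPair {n : ℕ} {q : Finset ℕ × Finset ℕ} (hq : q ∈ peakPairs n) :
    upsBelowOfPeaks n (complPair n q) = n - upsBelowOfPeaks n q := by
  have hcompl (h : ℕ) (hh : h ∈ range n) :
      #{x ∈ range n \ q.1 | x ≤ h} ≤ #{y ∈ range n \ q.2 | y < h} ↔
        ¬#{x ∈ q.1 | x ≤ h} ≤ #{y ∈ q.2 | y < h} := by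
    have hx := card_filter_sdiff_add_card_filter hq.1 (· ≤ h)
    have hy := card_filter_sdiff_add_card_filter hq.2.1 (· < h)
    have hle : {x ∈ range n | x ≤ h} = range (h + 1) := by
      ext x; simp only [mem_filter, mem_range] at hh ⊢; omega
    have hlt : {x ∈ range n | x < h} = range h := by
      ext x; simp only [mem_filter, mem_range] at hh ⊢; omega
    rw [hle, card_range] at hx
    rw [hlt, card_range] at hy
    omega
  rw [upsBelowOfPeaks, upsBelowOfPeaks, complPair, filter_congr hcompl, filter_not,
    card_sdiff_of_subset (filter_subset _ _), card_range]

lemma ncard_peakPairs_complPair {n m k : ℕ} (hm : m ≤ n) (hk : k ≤ n) :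
    {q ∈ peakPairs n | upsBelowOfPeaks n q = m ∧ #q.1 = k}.ncard =
      {q ∈ peakPairs n | upsBelowOfPeaks n q = n - m ∧ #q.1 = n - k}.ncard := by
  refine Set.ncard_congr (fun q _ => complPair n q) ?_ ?_ ?_
  · rintro q ⟨hq, hm, hk⟩
    exact ⟨complPair_mem_peakPairs hq, by rw [upsBelowOfPeaks_complPair hq, hm],
      by rw [card_complPair_fst hq, hk]⟩
  · intro q r hq hr h
    rw [← complPair_complPair hq.1, h, complPair_complPair hr.1]
  · rintro q ⟨hq, hqm, hqk⟩
    refine ⟨complPair n q, ⟨complPair_mem_peakPairs hq, ?_, ?_⟩, complPair_complPair hq⟩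
    · rw [upsBelowOfPeaks_complPair hq, hqm]; omega
    · rw [card_complPair_fst hq, hqk]; omega

end LatticePath

theorem stmt_2_general (n m k : ℕ) (hm : m ≤ n) (hk' : k ≤ n) :
    pC n m k = pC n (n - m) (n - k) := by
  rw [LatticePath.pC_eq_ncard, LatticePath.pC_eq_ncard]
  exact LatticePath.ncard_peakPairs_complPair hm hk'

/-- `p_{n,m,k} = p_{n,n-m,n-k}`. -/
theorem stmt_2 (n m k : ℕ) (hn : 1 ≤ n) (hm : m ≤ n) (hk : 1 ≤ k) (hk' : k ≤ n) :
    pC n m k = pC n (n - m) (n - k) :=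
  stmt_2_general n m k hm hk'
end

section
/- For integers n ≥ 1, 0 ≤ m ≤ n, and 1 ≤ k ≤ n, the number of (n,m)-Dyck paths with k peaks that start with U and end with D equals the number of (n,n-m)-Dyck paths with n-k peaks that start with D and end with U, i.e., p^{UD}_{n,m,k} = p^{DU}_{n,n-m,n-k}. -/
/-!
Swapping up and down steps turns a path starting with `D` and ending with `U` into one starting
with `U` and ending with `D`; it replaces `m` by `n - m` and, as peaks and valleys alternate,
`n - k` peaks by `n + 1 - k` peaks. So it suffices to show `p^{UD}_{n,m,k} = p^{UD}_{n,m,n+1-k}`.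

A `UD`-path with `k` peaks is determined by the set `S ∋ 0` of the columns of its up runs and the
set `T ∋ n` of the heights of its peaks, two `k`-subsets of `{0, …, n}`. Its up step leaving
height `j` lies in the column of the up run numbered `#(T ∩ [0, j])`, so it is below the diagonal
iff `#(S ∩ [0, j]) ≤ #(T ∩ [0, j])`. Replacing `(S, T)` by `({0, …, n} \ T, {0, …, n} \ S)` turns
`k` into `n + 1 - k` and preserves this condition, because `#(Xᶜ ∩ [0, j]) = j + 1 - #(X ∩ [0, j])`.
-/

open Finset
open Nat (count nth)

namespace NMDyckPath

/-! ### Swapping up and down steps -/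

theorem countP_range_succ (P : ℕ → Bool) (n : ℕ) :
    (List.range (n + 1)).countP P
      = (if P 0 then 1 else 0) + (List.range n).countP fun i => P (i + 1) := by
  rw [List.range_succ_eq_map, List.countP_cons, List.countP_map, Nat.add_comm]
  rfl

/-- `upsBelow` of a path that is preceded by `u` up and `d` down steps. -/
def upsBelowFrom (u d : ℕ) : List Bool → ℕ
  | [] => 0
  | true :: r => (if u < d then 1 else 0) + upsBelowFrom (u + 1) d r
  | false :: r => upsBelowFrom u (d + 1) r

theorem countP_eq_upsBelowFrom (p : List Bool) (u d : ℕ) :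
    (List.range p.length).countP (fun i => p.getD i false &&
      decide (u + (p.take i).count true < d + (p.take i).count false)) = upsBelowFrom u d p := by
  induction p generalizing u d with
  | nil => rfl
  | cons x r ih =>
    rw [List.length_cons, countP_range_succ]
    cases x <;>
    · rw [upsBelowFrom, ← ih]
      simp only [List.getD_cons_succ, List.take_succ_cons, List.count_cons]
      simp [Nat.add_assoc, Nat.add_comm 1]

theorem upsBelow_eq_upsBelowFrom (p : List Bool) : upsBelow p = upsBelowFrom 0 0 p := by
  simpa [upsBelow] using countP_eq_upsBelowFrom p 0 0

/-- `upsBelowFrom d u (p.map not)` counts the down steps of `p` that start strictly above the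
diagonal. Matching each with the last earlier up step ending at its starting level identifies them
with the up steps not starting strictly below the diagonal, up to boundary terms. -/
theorem upsBelowFrom_add_upsBelowFrom_map_not (p : List Bool) (u d : ℕ) :
    upsBelowFrom u d p + upsBelowFrom d u (p.map not) + (d + p.count false - (u + p.count true))
      = p.count false + (d - u) := by
  induction p generalizing u d with
  | nil => simp [upsBelowFrom]
  | cons x r ih =>
    have := ih (u + if x then 1 else 0) (d + if x then 0 else 1)
    cases x <;> simp only [upsBelowFrom, List.map_cons, Bool.not_true, Bool.not_false,
      List.count_cons] at this ⊢ <;> split_ifs at * <;> simp at * <;> omega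

theorem upsBelow_add_upsBelow_map_not {p : List Bool} (h : p.count true = p.count false) :
    upsBelow p + upsBelow (p.map not) = p.count false := by
  have := upsBelowFrom_add_upsBelowFrom_map_not p 0 0
  rw [upsBelow_eq_upsBelowFrom, upsBelow_eq_upsBelowFrom]
  omega

theorem peaks_cons (x : Bool) (r : List Bool) :
    peaks (x :: r) = (if x && !r.getD 0 true then 1 else 0) + peaks r := by
  cases r with
  | nil => simp [peaks]
  | cons y t =>
    rw [peaks, List.length_cons, Nat.add_sub_cancel, List.length_cons, countP_range_succ]
    rfl

/-- The peaks of `p.map not` are the valleys of `p`, and peaks and valleys alternate. -/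
theorem peaks_add_ite_getLast (p : List Bool) :
    peaks p + (if p.getLast? = some true then 1 else 0)
      = peaks (p.map not) + (if p.head? = some true then 1 else 0) := by
  induction p with
  | nil => simp [peaks]
  | cons x r ih =>
    cases r with
    | nil => cases x <;> simp [peaks]
    | cons y t =>
      simp only [List.map_cons, peaks_cons, List.getLast?_cons_cons, List.head?_cons] at ih ⊢
      cases x <;> cases y <;> simp at ih ⊢ <;> omega

theorem IsNM.count_false_eq {n m : ℕ} {p : List Bool} (hp : IsNM n m p) : p.count false = n := by
  have := List.count_true_add_count_false p
  obtain ⟨hlen, htrue, -⟩ := hp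
  omega

theorem IsNM.map_not {n m : ℕ} {p : List Bool} (hp : IsNM n m p) : IsNM n (n - m) (p.map not) := by
  have hfalse := IsNM.count_false_eq hp
  obtain ⟨hlen, htrue, hbelow⟩ := hp
  have := upsBelow_add_upsBelow_map_not (htrue.trans hfalse.symm)
  refine ⟨by rw [List.length_map, hlen], ?_, by omega⟩
  simpa [List.count_eq_countP, List.countP_map, Function.comp_def] using hfalse

abbrev UDPath (n m k : ℕ) :=
  {p : List Bool // IsNM n m p ∧ peaks p = k ∧ p.head? = some true ∧ p.getLast? = some false}

abbrev DUPath (n m k : ℕ) :=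
  {p : List Bool // IsNM n m p ∧ peaks p = k ∧ p.head? = some false ∧ p.getLast? = some true}

theorem DUPath.map_not_mem {n m k : ℕ} (hm : m ≤ n) (hk : k ≤ n) (p : DUPath n (n - m) (n - k)) :
    IsNM n m (p.1.map not) ∧ peaks (p.1.map not) = n + 1 - k ∧
      (p.1.map not).head? = some true ∧ (p.1.map not).getLast? = some false := by
  obtain ⟨p, hp, hpeaks, hhead, hlast⟩ := p
  have := peaks_add_ite_getLast p
  simp only [hhead, hlast] at this
  dsimp only
  refine ⟨Nat.sub_sub_self hm ▸ IsNM.map_not hp, by simp at this; omega, ?_, ?_⟩ <;>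
    simp [hhead, hlast]

theorem UDPath.map_not_mem {n m k : ℕ} (hk : k ≤ n) (p : UDPath n m (n + 1 - k)) :
    IsNM n (n - m) (p.1.map not) ∧ peaks (p.1.map not) = n - k ∧
      (p.1.map not).head? = some false ∧ (p.1.map not).getLast? = some true := by
  obtain ⟨p, hp, hpeaks, hhead, hlast⟩ := p
  have := peaks_add_ite_getLast p
  simp only [hhead, hlast] at this
  dsimp only
  refine ⟨IsNM.map_not hp, by simp at this; omega, ?_, ?_⟩ <;> simp [hhead, hlast]

def duPathEquivUDPath {n m k : ℕ} (hm : m ≤ n) (hk : k ≤ n) :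
    DUPath n (n - m) (n - k) ≃ UDPath n m (n + 1 - k) where
  toFun p := ⟨p.1.map not, p.map_not_mem hm hk⟩
  invFun p := ⟨p.1.map not, p.map_not_mem hk⟩
  left_inv p := Subtype.ext (by simp [Function.comp_def])
  right_inv p := Subtype.ext (by simp [Function.comp_def])

/-! ### Columns of the up steps -/

/-- The columns of the up steps of a path started in column `d`. -/
def upCols : ℕ → List Bool → List ℕ
  | _, [] => []
  | d, true :: r => d :: upCols d r
  | d, false :: r => upCols (d + 1) r

/-- The path started in column `d` with up steps in the columns `l`, ending in column `F`. -/
def ofUpCols (F : ℕ) : ℕ → List ℕ → List Bool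
  | d, [] => List.replicate (F - d) false
  | d, a :: l => List.replicate (a - d) false ++ true :: ofUpCols F a l

theorem length_upCols (p : List Bool) (d : ℕ) : (upCols d p).length = p.count true := by
  induction p generalizing d with
  | nil => rfl
  | cons x r ih => cases x <;> simp [upCols, ih]

theorem le_of_mem_upCols {p : List Bool} {d v : ℕ} (hv : v ∈ upCols d p) : d ≤ v := by
  induction p generalizing d with
  | nil => simp [upCols] at hv
  | cons x r ih =>
    cases x
    · exact (Nat.le_succ d).trans (ih hv)
    · rcases List.mem_cons.1 hv with rfl | hv
      exacts [le_rfl, ih hv]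

theorem lt_of_mem_upCols {p : List Bool} (hp : p.getLast? = some false) {d v : ℕ}
    (hv : v ∈ upCols d p) : v < d + p.count false := by
  induction p generalizing d with
  | nil => simp at hp
  | cons x r ih =>
    cases r with
    | nil => cases x <;> simp_all [upCols]
    | cons y t =>
      rw [List.getLast?_cons_cons] at hp
      cases x
      · have := ih hp hv
        simp only [List.count_cons] at this ⊢
        simp at this ⊢
        omega
      · rcases List.mem_cons.1 hv with rfl | hv
        · have : 0 < (y :: t).count false := List.count_pos_iff.2 (List.mem_of_getLast? hp)
          simpa using this
        · simpa using ih hp hv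

theorem pairwise_upCols (p : List Bool) (d : ℕ) : (upCols d p).Pairwise (· ≤ ·) := by
  induction p generalizing d with
  | nil => exact List.Pairwise.nil
  | cons x r ih =>
    cases x
    · exact ih (d + 1)
    · exact List.pairwise_cons.2 ⟨fun _ => le_of_mem_upCols, ih d⟩

theorem upsBelowFrom_eq_countP_upCols (p : List Bool) (u d : ℕ) :
    upsBelowFrom u d p
      = (List.range (upCols d p).length).countP fun j => u + j < (upCols d p).getD j 0 := by
  induction p generalizing u d with
  | nil => rfl
  | cons x r ih =>
    cases x
    · exact ih u (d + 1)
    · rw [upsBelowFrom, upCols, List.length_cons, countP_range_succ, ih (u + 1) d]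
      simp [Nat.add_assoc, Nat.add_comm 1]

/-- Every run of up steps of a path ending with a down step is followed by a peak. -/
theorem peaks_eq_card_upCols {p : List Bool} (hp : p.getLast? = some false) (d : ℕ) :
    peaks p = (upCols d p).toFinset.card := by
  induction p generalizing d with
  | nil => simp at hp
  | cons x r ih =>
    cases r with
    | nil => cases x <;> simp_all [peaks, upCols]
    | cons y t =>
      rw [List.getLast?_cons_cons] at hp
      rw [peaks_cons]
      cases x
      · simpa [upCols] using ih hp (d + 1)
      · cases y
        · have hd : d ∉ upCols (d + 1) t := fun h => by simpa using le_of_mem_upCols h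
          have e : upCols d (true :: false :: t) = d :: upCols d (false :: t) := rfl
          rw [e, List.toFinset_cons, card_insert_of_notMem (by simpa [upCols] using hd), ← ih hp d]
          simp [Nat.add_comm]
        · simp [upCols, List.toFinset_cons, ih hp d]

theorem upCols_replicate_append (c d : ℕ) (q : List Bool) :
    upCols d (List.replicate c false ++ q) = upCols (d + c) q := by
  induction c generalizing d with
  | zero => rfl
  | succ c ih => rw [List.replicate_succ, List.cons_append, upCols, ih, Nat.add_right_comm]; rfl

theorem upCols_ofUpCols {l : List ℕ} (hl : l.Pairwise (· ≤ ·)) (F : ℕ) {d : ℕ}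
    (hd : ∀ v ∈ l, d ≤ v) : upCols d (ofUpCols F d l) = l := by
  induction l generalizing d with
  | nil => simpa [ofUpCols, upCols] using upCols_replicate_append (F - d) d []
  | cons a l ih =>
    rw [List.pairwise_cons] at hl
    rw [ofUpCols, upCols_replicate_append, Nat.add_sub_cancel' (hd a List.mem_cons_self), upCols,
      ih hl.2 hl.1]

theorem ofUpCols_succ {l : List ℕ} {F d : ℕ} (hd : ∀ v ∈ l, d + 1 ≤ v) (hF : d + 1 ≤ F) :
    ofUpCols F d l = false :: ofUpCols F (d + 1) l := by
  cases l with
  | nil => rw [ofUpCols, ofUpCols, show F - d = F - (d + 1) + 1 by omega]; rfl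
  | cons a l =>
    have := hd a List.mem_cons_self
    rw [ofUpCols, ofUpCols, show a - d = a - (d + 1) + 1 by omega]
    rfl

theorem ofUpCols_upCols (p : List Bool) (d : ℕ) :
    ofUpCols (d + p.count false) d (upCols d p) = p := by
  induction p generalizing d with
  | nil => simp [upCols, ofUpCols]
  | cons x r ih =>
    cases x
    · rw [upCols, List.count_cons_self, ← Nat.add_assoc, Nat.add_right_comm,
        ofUpCols_succ (fun _ => le_of_mem_upCols) (by omega), ih]
    · rw [upCols, ofUpCols, List.count_cons_of_ne (by decide), ih]
      simp

theorem count_true_ofUpCols (F d : ℕ) (l : List ℕ) : (ofUpCols F d l).count true = l.length := by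
  induction l generalizing d with
  | nil => simp [ofUpCols, List.count_replicate]
  | cons a l ih => simp [ofUpCols, ih, List.count_replicate]

theorem count_false_ofUpCols {l : List ℕ} (hl : l.Pairwise (· ≤ ·)) {F d : ℕ}
    (hd : ∀ v ∈ l, d ≤ v) (hF : ∀ v ∈ l, v ≤ F) : (ofUpCols F d l).count false = F - d := by
  induction l generalizing d with
  | nil => simp [ofUpCols]
  | cons a l ih =>
    rw [List.pairwise_cons] at hl
    have had := hd a List.mem_cons_self
    have haF := hF a List.mem_cons_self
    rw [ofUpCols, List.count_append, List.count_cons, ih hl.2 hl.1 fun v hv => hF v (by simp [hv])]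
    simp
    omega

theorem getLast?_ofUpCols {l : List ℕ} {F d : ℕ} (hd : d < F) (hF : ∀ v ∈ l, v < F) :
    (ofUpCols F d l).getLast? = some false := by
  induction l generalizing d with
  | nil => simp [ofUpCols, List.getLast?_replicate]; omega
  | cons a l ih =>
    rw [ofUpCols, List.getLast?_append, List.getLast?_cons,
      ih (hF a List.mem_cons_self) fun v hv => hF v (by simp [hv])]
    rfl

/-- The column lists `upCols 0 p` of the paths `p` from `(0,0)` to `(n,n)` that start with an up
and end with a down step. -/
structure IsUDCols (n : ℕ) (l : List ℕ) : Prop where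
  length_eq : l.length = n
  pairwise_le : l.Pairwise (· ≤ ·)
  head?_eq : l.head? = some 0
  lt_of_mem : ∀ v ∈ l, v < n

def excedanceCount (l : List ℕ) : ℕ :=
  (List.range l.length).countP fun j => j < l.getD j 0

theorem upsBelow_eq_excedanceCount (p : List Bool) :
    upsBelow p = excedanceCount (upCols 0 p) := by
  rw [upsBelow_eq_upsBelowFrom, upsBelowFrom_eq_countP_upCols]
  simp [excedanceCount]

theorem isUDCols_upCols {n : ℕ} {p : List Bool} (htrue : p.count true = n)
    (hfalse : p.count false = n) (hhead : p.head? = some true) (hlast : p.getLast? = some false) :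
    IsUDCols n (upCols 0 p) where
  length_eq := by rw [length_upCols, htrue]
  pairwise_le := pairwise_upCols p 0
  head?_eq := by
    obtain ⟨r, rfl⟩ : ∃ r, p = true :: r := List.head?_eq_some_iff.1 hhead
    rfl
  lt_of_mem v hv := by simpa [hfalse] using lt_of_mem_upCols hlast hv

namespace IsUDCols

variable {n : ℕ} {l : List ℕ}

theorem upCols_ofUpCols (hl : IsUDCols n l) : upCols 0 (ofUpCols n 0 l) = l :=
  NMDyckPath.upCols_ofUpCols hl.pairwise_le n fun v _ => v.zero_le

theorem count_true_ofUpCols (hl : IsUDCols n l) : (ofUpCols n 0 l).count true = n := by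
  rw [NMDyckPath.count_true_ofUpCols, hl.length_eq]

theorem count_false_ofUpCols (hl : IsUDCols n l) : (ofUpCols n 0 l).count false = n :=
  NMDyckPath.count_false_ofUpCols hl.pairwise_le (fun v _ => v.zero_le)
    fun v hv => (hl.lt_of_mem v hv).le

theorem head?_ofUpCols (hl : IsUDCols n l) : (ofUpCols n 0 l).head? = some true := by
  obtain ⟨r, hr⟩ := List.head?_eq_some_iff.1 hl.head?_eq
  simp [hr, ofUpCols]

theorem getLast?_ofUpCols (hl : IsUDCols n l) : (ofUpCols n 0 l).getLast? = some false := by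
  obtain ⟨r, hr⟩ := List.head?_eq_some_iff.1 hl.head?_eq
  exact NMDyckPath.getLast?_ofUpCols (hl.lt_of_mem 0 (by simp [hr])) hl.lt_of_mem

end IsUDCols

abbrev UDCols (n m k : ℕ) :=
  {l : List ℕ // IsUDCols n l ∧ excedanceCount l = m ∧ l.toFinset.card = k}

theorem UDPath.upCols_mem {n m k : ℕ} (p : UDPath n m k) :
    IsUDCols n (upCols 0 p.1) ∧ excedanceCount (upCols 0 p.1) = m ∧
      (upCols 0 p.1).toFinset.card = k := by
  obtain ⟨p, hp, hpeaks, hhead, hlast⟩ := p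
  exact ⟨isUDCols_upCols hp.2.1 (IsNM.count_false_eq hp) hhead hlast,
    by rw [← upsBelow_eq_excedanceCount, hp.2.2], by rw [← peaks_eq_card_upCols hlast, hpeaks]⟩

theorem UDCols.ofUpCols_mem {n m k : ℕ} (l : UDCols n m k) :
    IsNM n m (ofUpCols n 0 l.1) ∧ peaks (ofUpCols n 0 l.1) = k ∧
      (ofUpCols n 0 l.1).head? = some true ∧ (ofUpCols n 0 l.1).getLast? = some false := by
  obtain ⟨l, hl, hexc, hcard⟩ := l
  refine ⟨⟨?_, hl.count_true_ofUpCols, ?_⟩, ?_, hl.head?_ofUpCols, hl.getLast?_ofUpCols⟩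
  · rw [← List.count_true_add_count_false, hl.count_true_ofUpCols, hl.count_false_ofUpCols]
    omega
  · rw [upsBelow_eq_excedanceCount, hl.upCols_ofUpCols, hexc]
  · rw [peaks_eq_card_upCols hl.getLast?_ofUpCols 0, hl.upCols_ofUpCols, hcard]

def udPathEquivUDCols (n m k : ℕ) : UDPath n m k ≃ UDCols n m k where
  toFun p := ⟨upCols 0 p.1, p.upCols_mem⟩
  invFun l := ⟨ofUpCols n 0 l.1, l.ofUpCols_mem⟩
  left_inv p := Subtype.ext <| by
    simpa [IsNM.count_false_eq p.2.1] using ofUpCols_upCols p.1 0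
  right_inv l := Subtype.ext l.2.1.upCols_ofUpCols

/-! ### Up runs and peaks -/

theorem getD_le_getD {l : List ℕ} (hl : l.Pairwise (· ≤ ·)) {i j : ℕ} (hij : i ≤ j)
    (hj : j < l.length) : l.getD i 0 ≤ l.getD j 0 := by
  rw [List.getD_eq_getElem _ _ (hij.trans_lt hj), List.getD_eq_getElem _ _ hj]
  exact hl.sortedLE.getElem_le_getElem_of_le hij

theorem count_mem_eq_card {S : Finset ℕ} {N : ℕ} (h : ∀ x ∈ S, x < N) :
    count (· ∈ S) N = S.card := by
  rw [Nat.count_eq_card_filter_range, filter_mem_eq_inter, inter_eq_right.2 fun x hx => by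
    simpa using h x hx]

theorem toFinset_ofPred_mem (S : Finset ℕ) (hf : (Set.ofPred (· ∈ S)).Finite) :
    hf.toFinset = S := by
  ext
  simp

theorem count_lt_card_of_mem {S : Finset ℕ} {s : ℕ} (hs : s ∈ S) : count (· ∈ S) s < S.card := by
  have := Nat.count_lt_card (p := (· ∈ S)) S.finite_toSet hs
  rwa [toFinset_ofPred_mem] at this

theorem lt_nth_mem_iff {S : Finset ℕ} {i j : ℕ} (hi : i < S.card) :
    j < nth (· ∈ S) i ↔ count (· ∈ S) (j + 1) ≤ i := by
  refine ⟨Nat.le_nth_of_count_le, fun h => ?_⟩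
  by_contra! hle
  have := Nat.count_monotone (· ∈ S) (Nat.add_le_add_right hle 1)
  rw [Nat.count_nth_succ fun hf => by rwa [toFinset_ofPred_mem]] at this
  omega

theorem nth_lt_nth_mem_iff {S : Finset ℕ} {a b : ℕ} (ha : a < S.card) (hb : b < S.card) :
    nth (· ∈ S) a < nth (· ∈ S) b ↔ a < b :=
  (Nat.nth_strictMonoOn S.finite_toSet).lt_iff_lt (by simpa [toFinset_ofPred_mem])
    (by simpa [toFinset_ofPred_mem])

/-- The heights of the peaks of the path with up-step columns `l` (of length `n`). -/
def peakRows (n : ℕ) (l : List ℕ) : Finset ℕ :=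
  {j ∈ range (n + 1) | 0 < j ∧ (j = n ∨ l.getD (j - 1) 0 < l.getD j 0)}

/-- The columns `S` of the up runs and the heights `T` of the peaks of a path from `(0,0)` to
`(n,n)` that starts with an up and ends with a down step. -/
structure IsRunPair (n : ℕ) (S T : Finset ℕ) : Prop where
  left_subset : S ⊆ range (n + 1)
  right_subset : T ⊆ range (n + 1)
  zero_mem_left : 0 ∈ S
  not_mem_left : n ∉ S
  zero_not_mem_right : 0 ∉ T
  mem_right : n ∈ T
  card_eq : S.card = T.card

/-- The `j`-th up step lies in the column of the up run ending at the first peak at height `> j`. -/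
noncomputable def colsOfRuns (n : ℕ) (S T : Finset ℕ) : List ℕ :=
  (List.range n).map fun j => nth (· ∈ S) (count (· ∈ T) (j + 1))

def runBelowCount (n : ℕ) (S T : Finset ℕ) : ℕ :=
  (List.range n).countP fun j => count (· ∈ S) (j + 1) ≤ count (· ∈ T) (j + 1)

theorem succ_mem_peakRows_iff {n j : ℕ} (l : List ℕ) (hj : j + 1 < n) :
    j + 1 ∈ peakRows n l ↔ l.getD j 0 < l.getD (j + 1) 0 := by
  simp [peakRows]
  omega

theorem count_toFinset_getD_succ {l : List ℕ} (hl : l.Pairwise (· ≤ ·)) {j : ℕ}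
    (hj : j + 1 < l.length) :
    count (· ∈ l.toFinset) (l.getD (j + 1) 0)
      = count (· ∈ l.toFinset) (l.getD j 0) + if l.getD j 0 < l.getD (j + 1) 0 then 1 else 0 := by
  have hle := getD_le_getD hl (by omega : j ≤ j + 1) hj
  split_ifs with hlt
  · obtain ⟨b, hb⟩ : ∃ b, l.getD (j + 1) 0 = l.getD j 0 + 1 + b := ⟨_, (Nat.add_sub_of_le hlt).symm⟩
    have hgap : count (fun k => l.getD j 0 + 1 + k ∈ l.toFinset) b = 0 := by
      refine Nat.count_iff_forall_not.2 fun k hk hmem => ?_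
      obtain ⟨i, hi, hx⟩ := List.mem_iff_getElem.1 (List.mem_toFinset.1 hmem)
      rw [← List.getD_eq_getElem _ 0 hi] at hx
      rcases le_or_gt i j with hij | hij
      · have := getD_le_getD hl hij (by omega)
        omega
      · have := getD_le_getD hl (by omega : j + 1 ≤ i) hi
        omega
    have hmem : l.getD j 0 ∈ l.toFinset := by
      rw [List.getD_eq_getElem _ _ (by omega)]
      exact List.mem_toFinset.2 (List.getElem_mem _)
    rw [hb, Nat.count_add, hgap, Nat.count_succ, if_pos hmem]
  · rw [show l.getD (j + 1) 0 = l.getD j 0 by omega, Nat.add_zero]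

namespace IsUDCols

variable {n : ℕ} {l : List ℕ}

theorem count_toFinset_getD (hl : IsUDCols n l) {j : ℕ} (hj : j < n) :
    count (· ∈ l.toFinset) (l.getD j 0) = count (· ∈ peakRows n l) (j + 1) := by
  induction j with
  | zero =>
    obtain ⟨r, hr⟩ := List.head?_eq_some_iff.1 hl.head?_eq
    simp [hr, Nat.count_one, peakRows]
  | succ j ih =>
    rw [count_toFinset_getD_succ hl.pairwise_le (by rw [hl.length_eq]; omega), ih (by omega),
      Nat.count_succ (· ∈ peakRows n l) (j + 1)]
    simp only [succ_mem_peakRows_iff l hj]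

theorem getD_mem_toFinset {j : ℕ} (hl : IsUDCols n l) (hj : j < n) : l.getD j 0 ∈ l.toFinset := by
  rw [List.getD_eq_getElem _ _ (by rw [hl.length_eq]; exact hj)]
  exact List.mem_toFinset.2 (List.getElem_mem _)

theorem one_le (hl : IsUDCols n l) : 1 ≤ n := by
  obtain ⟨r, rfl⟩ := List.head?_eq_some_iff.1 hl.head?_eq
  rw [← hl.length_eq]
  simp

theorem colsOfRuns_eq (hl : IsUDCols n l) : colsOfRuns n l.toFinset (peakRows n l) = l := by
  refine List.ext_getElem (by simp [colsOfRuns, hl.length_eq]) fun j hj _ => ?_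
  simp only [colsOfRuns, List.length_map, List.length_range] at hj
  simp only [colsOfRuns, List.getElem_map, List.getElem_range]
  rw [← hl.count_toFinset_getD hj, Nat.nth_count (hl.getD_mem_toFinset hj), List.getD_eq_getElem]

theorem card_toFinset_eq_card_peakRows (hl : IsUDCols n l) :
    l.toFinset.card = (peakRows n l).card := by
  have hn := hl.one_le
  have hlast : ∀ v ∈ l.toFinset, v < l.getD (n - 1) 0 + 1 := fun v hv => by
    obtain ⟨i, hi, rfl⟩ := List.mem_iff_getElem.1 (List.mem_toFinset.1 hv)
    rw [← List.getD_eq_getElem _ 0 hi]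
    have := hl.length_eq
    have := getD_le_getD hl.pairwise_le (by omega : i ≤ n - 1) (by omega)
    omega
  rw [← count_mem_eq_card hlast, Nat.count_succ, if_pos (hl.getD_mem_toFinset (by omega)),
    hl.count_toFinset_getD (by omega), Nat.sub_add_cancel hn,
    ← count_mem_eq_card (N := n + 1) fun x hx => by simpa [peakRows] using (mem_filter.1 hx).1,
    Nat.count_succ, if_pos (by simp [peakRows]; omega)]

theorem isRunPair (hl : IsUDCols n l) : IsRunPair n l.toFinset (peakRows n l) where
  left_subset v hv := by
    simpa using (hl.lt_of_mem v (List.mem_toFinset.1 hv)).trans n.lt_succ_self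
  right_subset := filter_subset _ _
  zero_mem_left := List.mem_toFinset.2 (List.mem_of_head? hl.head?_eq)
  not_mem_left h := (hl.lt_of_mem n (List.mem_toFinset.1 h)).false
  zero_not_mem_right := by simp [peakRows]
  mem_right := by simpa [peakRows, Nat.pos_iff_ne_zero, Nat.one_le_iff_ne_zero] using hl.one_le
  card_eq := hl.card_toFinset_eq_card_peakRows

end IsUDCols

namespace IsRunPair

variable {n : ℕ} {S T : Finset ℕ}

theorem count_right_add_one (h : IsRunPair n S T) : count (· ∈ T) n + 1 = T.card := by
  have := count_mem_eq_card (N := n + 1) fun x hx => mem_range.1 (h.right_subset hx)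
  rwa [Nat.count_succ, if_pos h.mem_right] at this

theorem count_right_lt_card (h : IsRunPair n S T) {j : ℕ} (hj : j < n) :
    count (· ∈ T) (j + 1) < S.card := by
  have := Nat.count_monotone (· ∈ T) (by omega : j + 1 ≤ n)
  have := h.count_right_add_one
  have := h.card_eq
  omega

theorem getD_colsOfRuns {j : ℕ} (hj : j < n) :
    (colsOfRuns n S T).getD j 0 = nth (· ∈ S) (count (· ∈ T) (j + 1)) := by
  simp [colsOfRuns, hj]

theorem one_le (h : IsRunPair n S T) : 1 ≤ n :=
  Nat.pos_of_ne_zero fun hn => h.zero_not_mem_right (hn ▸ h.mem_right)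

theorem nth_mem_left (h : IsRunPair n S T) {j : ℕ} (hj : j < n) :
    nth (· ∈ S) (count (· ∈ T) (j + 1)) ∈ S :=
  Nat.nth_mem _ fun hf => by rw [toFinset_ofPred_mem]; exact h.count_right_lt_card hj

theorem nth_lt (h : IsRunPair n S T) {j : ℕ} (hj : j < n) :
    nth (· ∈ S) (count (· ∈ T) (j + 1)) < n := by
  have hmem := h.nth_mem_left hj
  have := mem_range.1 (h.left_subset hmem)
  have : nth (· ∈ S) (count (· ∈ T) (j + 1)) ≠ n := fun he => h.not_mem_left (he ▸ hmem)
  omega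

theorem isUDCols (h : IsRunPair n S T) : IsUDCols n (colsOfRuns n S T) where
  length_eq := by simp [colsOfRuns]
  pairwise_le := by
    refine List.pairwise_iff_getElem.2 fun i j hi hj hij => ?_
    simp only [colsOfRuns, List.length_map, List.length_range] at hi hj
    simp only [colsOfRuns, List.getElem_map, List.getElem_range]
    exact Nat.nth_le_nth' (Nat.count_monotone _ (by omega)) fun hf => by
      rw [toFinset_ofPred_mem]; exact h.count_right_lt_card hj
  head?_eq := by
    obtain ⟨n, rfl⟩ := Nat.exists_eq_add_of_le' h.one_le
    simp [colsOfRuns, List.range_succ_eq_map, Nat.count_one, h.zero_not_mem_right,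
      Nat.nth_zero_of_zero h.zero_mem_left]
  lt_of_mem v hv := by
    obtain ⟨j, hj, rfl⟩ := List.mem_map.1 hv
    exact h.nth_lt (List.mem_range.1 hj)

theorem toFinset_colsOfRuns (h : IsRunPair n S T) : (colsOfRuns n S T).toFinset = S := by
  ext s
  refine ⟨fun hs => ?_, fun hs => ?_⟩
  · obtain ⟨j, hj, rfl⟩ := List.mem_map.1 (List.mem_toFinset.1 hs)
    exact h.nth_mem_left (List.mem_range.1 hj)
  · have hlt : count (· ∈ S) s < T.card := h.card_eq ▸ count_lt_card_of_mem hs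
    -- the up run in column `s` starts at height `j`
    obtain ⟨j, hj, hcount⟩ : ∃ j < n, count (· ∈ T) (j + 1) = count (· ∈ S) s := by
      rcases Nat.eq_zero_or_pos (count (· ∈ S) s) with h0 | hpos
      · exact ⟨0, h.one_le, by simp [h0, Nat.count_one, h.zero_not_mem_right]⟩
      have hvalid : ∀ hf : (Set.ofPred (· ∈ T)).Finite, count (· ∈ S) s - 1 < hf.toFinset.card :=
        fun hf => by rw [toFinset_ofPred_mem]; omega
      refine ⟨nth (· ∈ T) (count (· ∈ S) s - 1), ?_, by rw [Nat.count_nth_succ hvalid]; omega⟩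
      have := mem_range.1 (h.right_subset (Nat.nth_mem (p := (· ∈ T)) _ hvalid))
      refine lt_of_le_of_ne (by omega) fun he => ?_
      have := Nat.count_nth hvalid
      have := h.count_right_add_one
      rw [he] at *
      omega
    rw [colsOfRuns, List.mem_toFinset, List.mem_map]
    exact ⟨j, List.mem_range.2 hj, by rw [hcount, Nat.nth_count hs]⟩

theorem getD_colsOfRuns_lt_getD_succ_iff (h : IsRunPair n S T) {i : ℕ} (hi : i + 1 < n) :
    (colsOfRuns n S T).getD i 0 < (colsOfRuns n S T).getD (i + 1) 0 ↔ i + 1 ∈ T := by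
  rw [getD_colsOfRuns (by omega), getD_colsOfRuns hi,
    nth_lt_nth_mem_iff (h.count_right_lt_card (by omega)) (h.count_right_lt_card hi)]
  exact Nat.count_lt_count_succ_iff

theorem peakRows_colsOfRuns (h : IsRunPair n S T) : peakRows n (colsOfRuns n S T) = T := by
  ext j
  rcases j with _ | i
  · simp [peakRows, h.zero_not_mem_right]
  rcases lt_trichotomy (i + 1) n with hi | rfl | hi
  · rw [succ_mem_peakRows_iff _ hi, h.getD_colsOfRuns_lt_getD_succ_iff hi]
  · simp [peakRows, h.mem_right]
  · have : i + 1 ∉ T := fun hT => by have := mem_range.1 (h.right_subset hT); omega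
    simp [peakRows, this]
    omega

theorem excedanceCount_colsOfRuns (h : IsRunPair n S T) :
    excedanceCount (colsOfRuns n S T) = runBelowCount n S T := by
  rw [excedanceCount, h.isUDCols.length_eq, runBelowCount]
  refine List.countP_congr fun j hj => ?_
  have hj := List.mem_range.1 hj
  simp only [decide_eq_true_eq, getD_colsOfRuns hj, lt_nth_mem_iff (h.count_right_lt_card hj)]

end IsRunPair

abbrev RunPairs (n m k : ℕ) :=
  {ST : Finset ℕ × Finset ℕ //
    IsRunPair n ST.1 ST.2 ∧ runBelowCount n ST.1 ST.2 = m ∧ ST.1.card = k}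

noncomputable def udColsEquivRunPairs (n m k : ℕ) : UDCols n m k ≃ RunPairs n m k where
  toFun l := ⟨(l.1.toFinset, peakRows n l.1), l.2.1.isRunPair, by
    rw [← l.2.1.isRunPair.excedanceCount_colsOfRuns, l.2.1.colsOfRuns_eq, l.2.2.1], l.2.2.2⟩
  invFun ST := ⟨colsOfRuns n ST.1.1 ST.1.2, ST.2.1.isUDCols,
    by rw [ST.2.1.excedanceCount_colsOfRuns, ST.2.2.1],
    by rw [ST.2.1.toFinset_colsOfRuns, ST.2.2.2]⟩
  left_inv l := Subtype.ext l.2.1.colsOfRuns_eq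
  right_inv ST := Subtype.ext (Prod.ext ST.2.1.toFinset_colsOfRuns ST.2.1.peakRows_colsOfRuns)

/-! ### Complementing the up runs and peaks -/

theorem count_mem_range_sdiff {X : Finset ℕ} {n j : ℕ} (hj : j ≤ n + 1) :
    count (· ∈ range (n + 1) \ X) j = j - count (· ∈ X) j := by
  induction j with
  | zero => simp
  | succ j ih =>
    rw [Nat.count_succ, Nat.count_succ, ih (by omega)]
    have := Nat.count_le (p := (· ∈ X)) (n := j)
    by_cases hx : j ∈ X
    · simp [hx]
    · simp [hx, show j ≤ n by omega]
      omega

theorem runBelowCount_range_sdiff (n : ℕ) (S T : Finset ℕ) :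
    runBelowCount n (range (n + 1) \ T) (range (n + 1) \ S) = runBelowCount n S T := by
  refine List.countP_congr fun j hj => ?_
  have hj := List.mem_range.1 hj
  rw [count_mem_range_sdiff (by omega), count_mem_range_sdiff (by omega)]
  have := Nat.count_le (p := (· ∈ S)) (n := j + 1)
  have := Nat.count_le (p := (· ∈ T)) (n := j + 1)
  simp only [decide_eq_true_eq]
  omega

namespace IsRunPair

variable {n : ℕ} {S T : Finset ℕ}

theorem compl (h : IsRunPair n S T) : IsRunPair n (range (n + 1) \ T) (range (n + 1) \ S) where
  left_subset := sdiff_subset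
  right_subset := sdiff_subset
  zero_mem_left := by simp [h.zero_not_mem_right]
  not_mem_left := by simp [h.mem_right]
  zero_not_mem_right := by simp [h.zero_mem_left]
  mem_right := by simp [h.not_mem_left]
  card_eq := by
    rw [card_sdiff_of_subset h.right_subset, card_sdiff_of_subset h.left_subset, h.card_eq]

theorem card_compl (h : IsRunPair n S T) : (range (n + 1) \ T).card = n + 1 - S.card := by
  rw [card_sdiff_of_subset h.right_subset, card_range, h.card_eq]

end IsRunPair

def runPairsCompl (n m : ℕ) {k : ℕ} (hk : k ≤ n + 1) :
    RunPairs n m k ≃ RunPairs n m (n + 1 - k) where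
  toFun ST := ⟨(range (n + 1) \ ST.1.2, range (n + 1) \ ST.1.1), ST.2.1.compl,
    (runBelowCount_range_sdiff n _ _).trans ST.2.2.1, by rw [ST.2.1.card_compl, ST.2.2.2]⟩
  invFun ST := ⟨(range (n + 1) \ ST.1.2, range (n + 1) \ ST.1.1), ST.2.1.compl,
    (runBelowCount_range_sdiff n _ _).trans ST.2.2.1, by rw [ST.2.1.card_compl, ST.2.2.2]; omega⟩
  left_inv ST := Subtype.ext <|
    Prod.ext (Finset.sdiff_sdiff_eq_self ST.2.1.left_subset)
      (Finset.sdiff_sdiff_eq_self ST.2.1.right_subset)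
  right_inv ST := Subtype.ext <|
    Prod.ext (Finset.sdiff_sdiff_eq_self ST.2.1.left_subset)
      (Finset.sdiff_sdiff_eq_self ST.2.1.right_subset)

end NMDyckPath

open NMDyckPath

theorem stmt_8_general (n m k : ℕ) (hm : m ≤ n) (hk' : k ≤ n) :
    pXY n m k true false = pXY n (n - m) (n - k) false true :=
  calc pXY n m k true false
      = Nat.card (RunPairs n m k) :=
        Nat.card_congr ((udPathEquivUDCols n m k).trans (udColsEquivRunPairs n m k))
    _ = Nat.card (RunPairs n m (n + 1 - k)) := Nat.card_congr (runPairsCompl n m (by omega))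
    _ = Nat.card (UDPath n m (n + 1 - k)) :=
        (Nat.card_congr ((udPathEquivUDCols n m _).trans (udColsEquivRunPairs n m _))).symm
    _ = pXY n (n - m) (n - k) false true := (Nat.card_congr (duPathEquivUDPath hm hk')).symm

/-- `p^{UD}_{n,m,k} = p^{DU}_{n,n-m,n-k}`. -/
theorem stmt_8 (n m k : ℕ) (hn : 1 ≤ n) (hm : m ≤ n) (hk : 1 ≤ k) (hk' : k ≤ n) :
    pXY n m k true false = pXY n (n - m) (n - k) false true :=
  stmt_8_general n m k hm hk'
end

section
/- For integers n ≥ 1, 0 ≤ m ≤ n, and 1 ≤ k ≤ n-1, the number of (n,m)-Dyck paths with k peaks that start with D and end with U equals the number of (n,n-m)-Dyck paths with k+1 peaks that start with U and end with D, i.e., p^{DU}_{n,m,k} = p^{UD}_{n,n-m,k+1}. -/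
/-!
Path reversal `θ` is an involution, so it suffices to track the three statistics through it.
An up step of `p` starting below the diagonal becomes, after reversal, an up step starting
weakly above it (the heights of a balanced path before and after a step are complementary), so
`upsBelow` turns `m` into `n - m`. Reversal turns peaks `UD` into valleys `DU`, and along any
path the numbers of peaks and valleys differ only through the first and last steps:
`#valleys + [starts with U] = #peaks + [ends with U]`. A `D…U` path therefore has one valley
more than it has peaks.
-/

theorem List.countP_range_reflect (N : ℕ) (f : ℕ → Bool) :
    (List.range N).countP f = (List.range N).countP (fun j => f (N - 1 - j)) := by
  rw [← List.countP_reverse, List.range_eq_range', List.reverse_range', List.countP_map]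
  simp only [Nat.zero_add, List.range_eq_range']
  rfl

theorem List.countP_range_getD_eq_count_true (l : List Bool) :
    (List.range l.length).countP (fun i => l.getD i false) = l.count true := by
  induction l with
  | nil => rfl
  | cons a t ih =>
    rw [List.length_cons, List.range_succ_eq_map, List.countP_cons, List.countP_map,
      List.count_cons]
    simp only [Function.comp_def, List.getD_cons_succ, ih, List.getD_cons_zero]
    cases a <;> rfl

section Reversal

variable {p : List Bool} {i : ℕ}

/-- The prefix of `p.reverse` of length `p.length - 1 - i` is the reversed suffix after step `i`. -/
theorem reverse_take_below_iff (hbal : p.count true = p.count false) (hi : i < p.length)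
    (hup : p[i] = true) :
    (p.reverse.take (p.length - 1 - i)).count true
        < (p.reverse.take (p.length - 1 - i)).count false ↔
      ¬ (p.take i).count true < (p.take i).count false := by
  have hsuffix : p.reverse.take (p.length - 1 - i) = (p.drop (i + 1)).reverse := by
    rw [List.take_reverse]; congr 2; omega
  have hprefix : p.take (i + 1) = p.take i ++ [true] := by
    rw [List.take_add_one, List.getElem?_eq_getElem hi, hup]; rfl
  have hsplit (b : Bool) : (p.take (i + 1)).count b + (p.drop (i + 1)).count b = p.count b := by
    rw [← List.count_append, List.take_append_drop]
  have ht : (p.take i).count true + 1 + (p.drop (i + 1)).count true = p.count true := by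
    rw [← hsplit true, hprefix, List.count_append]; rfl
  have hf : (p.take i).count false + (p.drop (i + 1)).count false = p.count false := by
    rw [← hsplit false, hprefix, List.count_append]; rfl
  rw [hsuffix, List.count_reverse, List.count_reverse]
  omega

theorem upsBelow_reverse_add_upsBelow (hbal : p.count true = p.count false) :
    upsBelow p.reverse + upsBelow p = p.count true := by
  have hreflect : ∀ i ∈ List.range p.length,
      (p.reverse.getD (p.length - 1 - i) false &&
        decide ((p.reverse.take (p.length - 1 - i)).count true <
          (p.reverse.take (p.length - 1 - i)).count false))
      = (p.getD i false && !decide ((p.take i).count true < (p.take i).count false)) := by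
    intro i hi
    rw [List.mem_range] at hi
    rw [List.getD_eq_getElem _ _ (by simp; omega), List.getElem_reverse,
      List.getD_eq_getElem _ _ hi]
    have hidx : p.length - 1 - (p.length - 1 - i) = i := by omega
    simp only [hidx]
    cases hup : p[i]
    · rfl
    · simp only [Bool.true_and, reverse_take_below_iff hbal hi hup, decide_not]
  unfold upsBelow
  rw [List.length_reverse, List.countP_range_reflect,
    List.countP_congr fun i hi => by rw [hreflect i hi], ← List.countP_range_getD_eq_count_true,
    List.countP_eq_countP_filter_add _ (fun i => p.getD i false)
      (fun i => decide ((p.take i).count true < (p.take i).count false)),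
    List.countP_filter, List.countP_filter, add_comm]

def valleys (p : List Bool) : ℕ :=
  (List.range (p.length - 1)).countP fun i => !p.getD i true && p.getD (i + 1) false

theorem peaks_reverse : peaks p.reverse = valleys p := by
  unfold peaks valleys
  rw [List.length_reverse, List.countP_range_reflect]
  refine List.countP_congr fun i hi => ?_
  rw [List.mem_range] at hi
  rw [List.getD_eq_getElem _ _ (by simp; omega), List.getD_eq_getElem _ _ (by simp; omega),
    List.getD_eq_getElem _ _ (by omega), List.getD_eq_getElem _ _ (by omega),
    List.getElem_reverse, List.getElem_reverse]
  have hi₁ : p.length - 1 - (p.length - 1 - 1 - i) = i + 1 := by omega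
  have hi₂ : p.length - 1 - (p.length - 1 - 1 - i + 1) = i := by omega
  simp only [hi₁, hi₂]
  rw [Bool.and_comm]

end Reversal

theorem peaks_cons_cons (a b : Bool) (t : List Bool) :
    peaks (a :: b :: t) = (if a && !b then 1 else 0) + peaks (b :: t) := by
  simp only [peaks, List.length_cons, Nat.add_sub_cancel, List.range_succ_eq_map, List.countP_cons,
    List.countP_map, Function.comp_def, List.getD_cons_succ, List.getD_cons_zero]
  omega

theorem valleys_cons_cons (a b : Bool) (t : List Bool) :
    valleys (a :: b :: t) = (if !a && b then 1 else 0) + valleys (b :: t) := by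
  simp only [valleys, List.length_cons, Nat.add_sub_cancel, List.range_succ_eq_map,
    List.countP_cons, List.countP_map, Function.comp_def, List.getD_cons_succ, List.getD_cons_zero]
  omega

theorem valleys_add_head_eq_peaks_add_getLast (p : List Bool) :
    valleys p + (if p.head? = some true then 1 else 0)
      = peaks p + (if p.getLast? = some true then 1 else 0) := by
  induction p with
  | nil => rfl
  | cons a t ih =>
    cases t with
    | nil => rfl
    | cons b t =>
      rw [peaks_cons_cons, valleys_cons_cons, List.getLast?_cons_cons]
      cases a <;> cases b <;> simp at ih ⊢ <;> omega

theorem IsNM.reverse {n m : ℕ} {p : List Bool} (h : IsNM n m p) : IsNM n (n - m) p.reverse := by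
  obtain ⟨hlen, hup, hbelow⟩ := h
  have hdown : p.count false = n := by
    have := List.count_true_add_count_false p
    omega
  have := upsBelow_reverse_add_upsBelow (p := p) (by omega)
  exact ⟨by simp [hlen], by simp [hup], by omega⟩

theorem isDU_iff_reverse_isUD {n m k : ℕ} (hm : m ≤ n) (p : List Bool) :
    (IsNM n m p ∧ peaks p = k ∧ p.head? = some false ∧ p.getLast? = some true) ↔
      (IsNM n (n - m) p.reverse ∧ peaks p.reverse = k + 1 ∧
        p.reverse.head? = some true ∧ p.reverse.getLast? = some false) := by
  have hturn := valleys_add_head_eq_peaks_add_getLast p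
  rw [List.head?_reverse, List.getLast?_reverse, peaks_reverse]
  constructor
  · rintro ⟨hp, rfl, hhead, hlast⟩
    simp only [hhead, hlast, Option.some.injEq, Bool.false_eq_true, ↓reduceIte, add_zero] at hturn
    exact ⟨hp.reverse, by omega, hlast, hhead⟩
  · rintro ⟨hp, hpeaks, hlast, hhead⟩
    simp only [hhead, hlast, Option.some.injEq, Bool.false_eq_true, ↓reduceIte, add_zero] at hturn
    refine ⟨?_, by omega, hhead, hlast⟩
    simpa [Nat.sub_sub_self hm] using hp.reverse

theorem stmt_9_general (n m k : ℕ) (hm : m ≤ n) :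
    pXY n m k false true = pXY n (n - m) (k + 1) true false :=
  Nat.card_congr <|
    (List.reverse_involutive.toPerm _).subtypeEquiv (isDU_iff_reverse_isUD hm)

/-- `p^{DU}_{n,m,k} = p^{UD}_{n,n-m,k+1}`. -/
theorem stmt_9 (n m k : ℕ) (hn : 1 ≤ n) (hm : m ≤ n) (hk : 1 ≤ k) (hk' : k ≤ n - 1) :
    pXY n m k false true = pXY n (n - m) (k + 1) true false :=
  stmt_9_general n m k hm
end

section
/- A lattice path from (0,0) to (n,n) using up steps (0,1) and down steps (1,0) is uniquely determined by the set of coordinates of its peaks, i.e., two such paths with the same set of peak positions are equal (for paths with at least one peak; every nonempty such path has at least one peak). -/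
/-- The set of coordinates of peaks of a path `p`: the peak corresponding to an up step
at position `i` immediately followed by a down step is the lattice point (x,y) reached
after the first `i+1` steps. -/
def peakSet (p : List Bool) : Set (ℕ × ℕ) :=
  {q | ∃ i, i + 1 < p.length ∧ p.getD i false = true ∧ p.getD (i + 1) true = false ∧
    q = ((p.take (i + 1)).count false, (p.take (i + 1)).count true)}

lemma peakSet_cons_false (t : List Bool) :
    peakSet (false :: t) = Prod.map (· + 1) id '' peakSet t := by
  ext z
  constructor
  · rintro ⟨_ | i, hlen, hup, hdown, rfl⟩
    · simp at hup
    · exact ⟨_, ⟨i, by simpa using hlen, hup, hdown, rfl⟩, by simp [List.take_succ_cons]⟩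
  · rintro ⟨_, ⟨i, hlen, hup, hdown, rfl⟩, rfl⟩
    exact ⟨i + 1, by simpa using hlen, hup, hdown, by simp [List.take_succ_cons]⟩

lemma peakSet_cons_true (t : List Bool) :
    peakSet (true :: t) =
      {z | z = (0, 1) ∧ t.head? = some false} ∪ Prod.map id (· + 1) '' peakSet t := by
  ext z
  constructor
  · rintro ⟨_ | i, hlen, hup, hdown, rfl⟩
    · left
      cases t <;> simp_all
    · refine Or.inr ⟨_, ⟨i, by simpa using hlen, hup, hdown, rfl⟩, ?_⟩
      simp [List.take_succ_cons]
  · rintro (⟨rfl, hhead⟩ | ⟨_, ⟨i, hlen, hup, hdown, rfl⟩, rfl⟩)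
    · obtain ⟨t, rfl⟩ : ∃ s, t = false :: s := by cases t <;> simp_all
      exact ⟨0, by simp, rfl, rfl, rfl⟩
    · exact ⟨i + 1, by simpa using hlen, hup, hdown, by simp [List.take_succ_cons]⟩

lemma zero_zero_notMem_peakSet (t : List Bool) : ((0, 0) : ℕ × ℕ) ∉ peakSet t := by
  rintro ⟨i, hlen, -, -, h⟩
  have := List.count_true_add_count_false (t.take (i + 1))
  simp only [Prod.ext_iff] at h
  grind [List.length_take]

lemma peakSet_cons_true_diff (t : List Bool) :
    peakSet (true :: t) \ {(0, 1)} = Prod.map id (· + 1) '' peakSet t := by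
  rw [peakSet_cons_true, Set.union_sdiff_distrib, Set.sdiff_eq_empty.mpr (fun z hz => hz.1),
    Set.empty_union, Set.sdiff_singleton_eq_self]
  rintro ⟨⟨a, b⟩, hab, hz⟩
  simp only [Prod.map, id, Prod.mk.injEq, Nat.add_eq_right] at hz
  obtain ⟨rfl, rfl⟩ := hz
  exact zero_zero_notMem_peakSet t hab

lemma exists_mem_peakSet_cons_true_fst_eq_zero {t : List Bool} (ht : false ∈ t) :
    ∃ y, (0, y) ∈ peakSet (true :: t) := by
  induction t with
  | nil => simp at ht
  | cons b t ih =>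
    cases b
    · exact ⟨1, by simp [peakSet_cons_true]⟩
    · obtain ⟨y, hy⟩ := ih (by simpa using ht)
      exact ⟨y + 1, by rw [peakSet_cons_true]; exact Or.inr ⟨(0, y), hy, rfl⟩⟩

lemma peakSet_cons_true_ne_cons_false {t : List Bool} (ht : false ∈ t) (s : List Bool) :
    peakSet (true :: t) ≠ peakSet (false :: s) := by
  intro h
  obtain ⟨y, hy⟩ := exists_mem_peakSet_cons_true_fst_eq_zero ht
  rw [h, peakSet_cons_false] at hy
  obtain ⟨w, -, hw⟩ := hy
  simp [Prod.ext_iff] at hw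

lemma eq_of_peakSet_eq {p q : List Bool} (hf : p.count false = q.count false)
    (ht : p.count true = q.count true) (h : peakSet p = peakSet q) : p = q := by
  induction p generalizing q with
  | nil => cases q with
    | nil => rfl
    | cons c s => cases c <;> simp at hf ht
  | cons b t ih =>
    cases q with
    | nil => cases b <;> simp at hf ht
    | cons c s =>
      cases b <;> cases c
      · refine congrArg _ (ih (by simpa using hf) (by simpa using ht) ?_)
        refine (Set.image_injective.mpr (Nat.succ_injective.prodMap Function.injective_id)) ?_
        rw [← peakSet_cons_false, ← peakSet_cons_false, h]
      · have hs : false ∈ s := List.count_pos_iff.mp (by simp at hf; omega)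
        exact absurd h.symm (peakSet_cons_true_ne_cons_false hs t)
      · have ht : false ∈ t := List.count_pos_iff.mp (by simp at hf; omega)
        exact absurd h (peakSet_cons_true_ne_cons_false ht s)
      · refine congrArg _ (ih (by simpa using hf) (by simpa using ht) ?_)
        refine (Set.image_injective.mpr (Function.injective_id.prodMap Nat.succ_injective)) ?_
        rw [← peakSet_cons_true_diff, ← peakSet_cons_true_diff, h]

theorem stmt_11_general (n : ℕ) (p q : List Bool)
    (hp : p.length = 2 * n ∧ p.count true = n)
    (hq : q.length = 2 * n ∧ q.count true = n)
    (h : peakSet p = peakSet q) : p = q := by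
  have hf : p.count false = q.count false := by
    have := List.count_true_add_count_false p
    have := List.count_true_add_count_false q
    omega
  exact eq_of_peakSet_eq hf (hp.2.trans hq.2.symm) h

/-- A lattice path from `(0,0)` to `(n,n)` with at least one peak is uniquely determined
by the set of coordinates of its peaks. -/
theorem stmt_11 (n : ℕ) (hn : 1 ≤ n) (p q : List Bool)
    (hp : p.length = 2 * n ∧ p.count true = n)
    (hq : q.length = 2 * n ∧ q.count true = n)
    (hne : (peakSet p).Nonempty) (h : peakSet p = peakSet q) : p = q :=
  stmt_11_general n p q hp hq h
end

section
/- Every lattice path from (0,0) to (n,n) using up steps (0,1) and down steps (1,0) that starts with an up step and has at least one up step below the line y=x can be uniquely decomposed as S·D·N·U·Q, where D is the first down step ending strictly below y=x, U is the first up step ending on the line y=x after D, S is a Dyck path, and the complement of N (swapping U and D) is a Dyck path. -/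
/-- A Dyck path (from `(0,0)` to `(j,j)` for some `j`, never strictly below `y = x`). -/
def IsDyckW (q : List Bool) : Prop :=
  q.count true = q.count false ∧ ∀ i, (q.take i).count false ≤ (q.take i).count true

/-
Think of the path as a walk whose height is (#ups − #downs). The step `D` is the first step to
height `−1`, so the part `S` before it is a Dyck path; conversely a Dyck path followed by a down
step can only end at that first step, which gives uniqueness. Since the whole path returns to
height `0`, the rest of the path, complemented, again dips below `y = x`, and the same
factorisation applied to it produces the complement of `N` and the step `U`.
-/

theorem List.count_map_not (l : List Bool) (b : Bool) : (l.map (!·)).count b = l.count (!b) := by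
  simpa using l.count_map_of_injective _ Bool.not_injective (!b)

theorem exists_count_take_lt_of_upsBelow_pos {p : List Bool} (h : 0 < upsBelow p) :
    ∃ j, (p.take j).count true < (p.take j).count false := by
  obtain ⟨j, -, hj⟩ := List.countP_pos_iff.1 h
  simp only [List.getD_eq_getElem?_getD, Bool.and_eq_true, decide_eq_true_eq] at hj
  exact ⟨j, hj.2⟩

theorem IsDyckW.length_le_of_append_false {S T r r' : List Bool} (hS : IsDyckW S)
    (hT : IsDyckW T) (h : S ++ false :: r = T ++ r') : T.length ≤ S.length := by
  by_contra! hlt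
  replace hlt : S.length + 1 ≤ T.length := hlt
  have hprefix : T.take (S.length + 1) = S ++ [false] := by
    rw [← List.take_append_of_le_length hlt, ← h, List.take_length_add_append]
    rfl
  have hT' := hT.2 (S.length + 1)
  rw [hprefix] at hT'
  have := hS.1
  simp [List.count_append] at hT'
  omega

theorem IsDyckW.eq_of_append_false {S T r r' : List Bool} (hS : IsDyckW S) (hT : IsDyckW T)
    (h : S ++ false :: r = T ++ false :: r') : S = T ∧ r = r' := by
  obtain ⟨hST, hr⟩ := List.append_inj h <|
    le_antisymm (hT.length_le_of_append_false hS h.symm) (hS.length_le_of_append_false hT h)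
  exact ⟨hST, (List.cons.inj hr).2⟩

theorem exists_isDyckW_append_false {p : List Bool}
    (h : ∃ j, (p.take j).count true < (p.take j).count false) :
    ∃ S r, p = S ++ false :: r ∧ IsDyckW S := by
  classical
  have hmin : ∀ j < Nat.find h, (p.take j).count false ≤ (p.take j).count true :=
    fun j hj => not_lt.1 (Nat.find_min h hj)
  have hfirst := Nat.find_spec h
  obtain ⟨s, hs⟩ : ∃ s, Nat.find h = s + 1 :=
    Nat.exists_eq_succ_of_ne_zero fun h0 => by simp [h0] at hfirst
  rw [hs] at hfirst hmin
  have hslen : s < p.length := by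
    by_contra! hge
    have := hmin s (by omega)
    rw [List.take_of_length_le hge] at this
    rw [List.take_of_length_le (by omega)] at hfirst
    omega
  rw [← List.take_concat_get' p s hslen] at hfirst
  have hstep : p[s] = false ∧ (p.take s).count true = (p.take s).count false := by
    have := hmin s (by omega)
    cases hps : p[s] <;> simp [hps, List.count_append] at hfirst ⊢ <;> omega
  refine ⟨p.take s, p.drop (s + 1), ?_, hstep.2, fun i => ?_⟩
  · rw [← hstep.1, ← List.drop_eq_getElem_cons, List.take_append_drop]
  · rw [List.take_take]
    exact hmin _ (by omega)

theorem existsUnique_isDyckW_append_false_append_true {p : List Bool}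
    (hbal : p.count true = p.count false)
    (h : ∃ j, (p.take j).count true < (p.take j).count false) :
    ∃! SNQ : List Bool × List Bool × List Bool,
      p = SNQ.1 ++ false :: (SNQ.2.1 ++ true :: SNQ.2.2) ∧
      IsDyckW SNQ.1 ∧ IsDyckW (SNQ.2.1.map (!·)) := by
  obtain ⟨S, r, rfl, hS⟩ := exists_isDyckW_append_false h
  have hr : ∃ j, ((r.map (!·)).take j).count true < ((r.map (!·)).take j).count false := by
    refine ⟨(r.map (!·)).length, ?_⟩
    have := hS.1
    simp only [List.take_length, List.count_map_not, Bool.not_true, Bool.not_false]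
    simp only [List.count_append, List.count_cons_self, List.count_cons_of_ne Bool.false_ne_true]
      at hbal
    omega
  obtain ⟨N, Q, hNQ, hN⟩ := exists_isDyckW_append_false hr
  have hr_eq : r = N.map (!·) ++ true :: Q.map (!·) := by
    simpa [Function.comp_def] using congrArg (List.map (!·)) hNQ
  refine ⟨(S, N.map (!·), Q.map (!·)), ⟨by rw [hr_eq], hS, by simpa [Function.comp_def]⟩, ?_⟩
  rintro ⟨S', N', Q'⟩ ⟨heq, hS', hN'⟩
  obtain ⟨rfl, rfl⟩ := hS.eq_of_append_false hS' heq
  obtain ⟨rfl, rfl⟩ := hN.eq_of_append_false hN' (by simpa using hNQ.symm)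
  simp [Function.comp_def]

theorem count_take_of_eq_isDyckW_append {p S N Q : List Bool}
    (hp : p = S ++ false :: (N ++ true :: Q)) (hS : IsDyckW S) (hN : IsDyckW (N.map (!·))) :
    (∀ j ≤ S.length, (p.take j).count false ≤ (p.take j).count true) ∧
      (∀ j, S.length + 1 ≤ j → j ≤ S.length + 1 + N.length →
        (p.take j).count true < (p.take j).count false) ∧
      (p.take (S.length + 1 + N.length + 1)).count true =
        (p.take (S.length + 1 + N.length + 1)).count false := by
  subst hp
  have hSbal := hS.1
  refine ⟨fun j hj => ?_, fun j hj hj' => ?_, ?_⟩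
  · rw [List.take_append_of_le_length hj]
    exact hS.2 j
  · obtain ⟨i, rfl⟩ := Nat.exists_eq_add_of_le hj
    have hNi := hN.2 i
    rw [add_assoc, List.take_length_add_append, add_comm, List.take_succ_cons,
      List.take_append_of_le_length (by omega)]
    simp only [← List.map_take, List.count_map_not, Bool.not_true, Bool.not_false] at hNi
    simp [List.count_append]
    omega
  · have hNbal := hN.1
    rw [show S.length + 1 + N.length + 1 = S.length + (N.length + 1 + 1) by ring,
      List.take_length_add_append, List.take_succ_cons, List.take_length_add_append]
    simp only [List.count_map_not, Bool.not_true, Bool.not_false] at hNbal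
    simp [List.count_append]
    omega

theorem stmt_18_general (n : ℕ) (p : List Bool) (hlen : p.length = 2 * n) (hup : p.count true = n)
    (hbelow : 1 ≤ upsBelow p) :
    ∃! SNQ : List Bool × List Bool × List Bool,
      p = SNQ.1 ++ false :: (SNQ.2.1 ++ true :: SNQ.2.2) ∧
      IsDyckW SNQ.1 ∧ IsDyckW (SNQ.2.1.map (!·)) ∧
      -- the path never goes strictly below `y = x` before the step `D`
      (∀ j ≤ SNQ.1.length, (p.take j).count false ≤ (p.take j).count true) ∧
      -- the path stays strictly below `y = x` from `D` up to (but excluding) the end of `U`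
      (∀ j, SNQ.1.length + 1 ≤ j → j ≤ SNQ.1.length + 1 + SNQ.2.1.length →
        (p.take j).count true < (p.take j).count false) ∧
      -- the step `U` ends on the line `y = x`
      (p.take (SNQ.1.length + 1 + SNQ.2.1.length + 1)).count true =
        (p.take (SNQ.1.length + 1 + SNQ.2.1.length + 1)).count false := by
  have hbal : p.count true = p.count false := by
    have := p.count_true_add_count_false
    omega
  obtain ⟨⟨S, N, Q⟩, ⟨hp, hS, hN⟩, huniq⟩ := existsUnique_isDyckW_append_false_append_true hbal
    (exists_count_take_lt_of_upsBelow_pos hbelow)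
  exact ⟨(S, N, Q), ⟨hp, hS, hN, count_take_of_eq_isDyckW_append hp hS hN⟩,
    fun SNQ h => huniq SNQ ⟨h.1, h.2.1, h.2.2.1⟩⟩

/-- Every path from `(0,0)` to `(n,n)` starting with an up step and having at least one up
step below `y = x` decomposes uniquely as `S ++ [D] ++ N ++ [U] ++ Q`, where `D` is the
first down step ending strictly below `y = x`, `U` is the first up step after it ending on
the line `y = x`, `S` is a Dyck path, and the complement of `N` is a Dyck path. -/
theorem stmt_18 (n : ℕ) (p : List Bool) (hlen : p.length = 2 * n) (hup : p.count true = n)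
    (hstart : p.head? = some true) (hbelow : 1 ≤ upsBelow p) :
    ∃! SNQ : List Bool × List Bool × List Bool,
      p = SNQ.1 ++ false :: (SNQ.2.1 ++ true :: SNQ.2.2) ∧
      IsDyckW SNQ.1 ∧ IsDyckW (SNQ.2.1.map (!·)) ∧
      -- the path never goes strictly below `y = x` before the step `D`
      (∀ j ≤ SNQ.1.length, (p.take j).count false ≤ (p.take j).count true) ∧
      -- the path stays strictly below `y = x` from `D` up to (but excluding) the end of `U`
      (∀ j, SNQ.1.length + 1 ≤ j → j ≤ SNQ.1.length + 1 + SNQ.2.1.length →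
        (p.take j).count true < (p.take j).count false) ∧
      -- the step `U` ends on the line `y = x`
      (p.take (SNQ.1.length + 1 + SNQ.2.1.length + 1)).count true =
        (p.take (SNQ.1.length + 1 + SNQ.2.1.length + 1)).count false :=
  stmt_18_general n p hlen hup hbelow
end
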